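/- arXiv:1710.07677 — 5 statements merged into one kernel-verified Lean document; each statement's English description precedes it below -/
import Mathlib

section
/- Fix b_0 ∈ [0,∞)^k. There exists a finite collection T, depending only on b_0 and k, of triples (ε, v_0, A) with ε > 0, v_0 ∈ (ε,1]^k, and A ⊆ ℤ_{≥0}^k a finite set satisfying b_0 ∉ P(A), such that for every set B ⊆ ℤ_{≥0}^k with b_0 ∉ P(B) there is a triple (ε, v_0, A) ∈ T for which: (i) v_0 · b_0 + ε < v_0 · p for every p ∈ P(B), and (ii) P(B) ⊆ P(A). -/
open MeasureTheory Metric Set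
open scoped ENNReal NNReal

noncomputable section

/-- Vector fields on ℝ^d. -/
abbrev VF (d : ℕ) : Type := (Fin d → ℝ) → (Fin d → ℝ)

/-- Lie bracket of vector fields: `[X,Y] = DY(X) − DX(Y)`. -/
noncomputable def vfBracket {d : ℕ} (X Y : VF d) : VF d :=
  fun x => fderiv ℝ Y x (X x) - fderiv ℝ X x (Y x)

/-- The vector field of a word.  A word is a nonempty string in `{1,…,k}`, encoded
here as a nonempty list whose head is the *last* letter, so that appending a
letter `i` to a word `w` is `i :: w`, and `X_{(w,i)} = [X_w, X_i]`. -/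
noncomputable def wordVF {d k : ℕ} (X : Fin k → VF d) : List (Fin k) → VF d
  | [] => fun _ => 0
  | [i] => X i
  | i :: j :: w => vfBracket (wordVF X (j :: w)) (X i)

/-- The degree of a word: the number of occurrences of each letter. -/
def wordDeg {k : ℕ} (w : List (Fin k)) : Fin k → ℕ := fun i => w.count i

/-- The degree of a `d`-tuple of words. -/
def tupleDeg {d k : ℕ} (I : Fin d → List (Fin k)) : Fin k → ℕ :=
  fun j => ∑ i, (I i).count j

/-- `λ_I = det(X_{w_1},…,X_{w_d})` for a `d`-tuple of words `I = (w_1,…,w_d)`. -/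
noncomputable def lambdaDet {d k : ℕ} (X : Fin k → VF d) (I : Fin d → List (Fin k)) :
    (Fin d → ℝ) → ℝ :=
  fun x => Matrix.det (Matrix.of fun r c : Fin d => wordVF X (I c) x r)

/-- `𝒫(B) = conv(⋃_{b ∈ B} (b + [0,∞)^k))`. -/
noncomputable def orthantHull {k : ℕ} (B : Set (Fin k → ℕ)) : Set (Fin k → ℝ) :=
  convexHull ℝ {p : Fin k → ℝ | ∃ b ∈ B, ∀ i, (b i : ℝ) ≤ p i}

/-- The Newton polytope of `X_1,…,X_k` at a point. -/
noncomputable def newtonPolytopeAt {d k : ℕ} (X : Fin k → VF d) (x : Fin d → ℝ) :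
    Set (Fin k → ℝ) :=
  orthantHull {b : Fin k → ℕ | ∃ I : Fin d → List (Fin k),
    (∀ i, I i ≠ []) ∧ tupleDeg I = b ∧ lambdaDet X I x ≠ 0}

/-- The Newton polytope of a set. -/
noncomputable def newtonPolytopeOn {d k : ℕ} (X : Fin k → VF d) (A : Set (Fin d → ℝ)) :
    Set (Fin k → ℝ) :=
  convexHull ℝ (⋃ x ∈ A, newtonPolytopeAt X x)

/-- `|b|₁ = Σᵢ |bⁱ|`. -/
def ellOne {k : ℕ} (b : Fin k → ℝ) : ℝ := ∑ i, |b i|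

/-- `q(b) = b / (|b|₁ − 1)`. -/
noncomputable def qMap {k : ℕ} (b : Fin k → ℝ) : Fin k → ℝ :=
  fun i => b i / (ellOne b - 1)

/-- The vector field `X = ⋆(dπ¹ ∧ ⋯ ∧ dπ^{d−1})` tangent to the fibers of a
submersion `π : ℝ^{n+1} → ℝ^n`: its `i`-th component is `(−1)^i` times the
determinant of the matrix obtained by deleting the `i`-th column of the Jacobian
matrix of `π`. -/
noncomputable def fiberVF {n : ℕ} (π : (Fin (n + 1) → ℝ) → (Fin n → ℝ)) : VF (n + 1) :=
  fun x i => (-1 : ℝ) ^ (i : ℕ) *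
    Matrix.det (Matrix.of fun r c : Fin n =>
      fderiv ℝ π x (Pi.single (i.succAbove c) 1) r)

/-- `Ψ` is the composition of flows `exp(t_d X_{J_d}) ∘ ⋯ ∘ exp(t_1 X_{J_1})(x₀)`
on the ball of radius `r` around `0`. -/
noncomputable def IsFlowComp {d k : ℕ} (X : Fin k → VF d) (J : Fin d → Fin k)
    (x₀ : Fin d → ℝ) (r : ℝ) (Ψ : (Fin d → ℝ) → (Fin d → ℝ)) : Prop :=
  Ψ 0 = x₀ ∧ ContDiffOn ℝ (⊤ : ℕ∞) Ψ (ball 0 r) ∧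
    ∀ (i : Fin d) (t : Fin d → ℝ), t ∈ ball 0 r → (∀ j, i < j → t j = 0) →
      HasDerivAt (fun s => Ψ (Function.update t i s)) (X (J i) (Ψ t)) (t i)

/-- The Jacobian determinant `det DΨ`. -/
noncomputable def jacDet {d : ℕ} (Ψ : (Fin d → ℝ) → (Fin d → ℝ)) : (Fin d → ℝ) → ℝ :=
  fun t => Matrix.det (Matrix.of fun i j : Fin d => fderiv ℝ Ψ t (Pi.single j 1) i)

/-- The Jacobian determinant computed with derivatives within a set. -/
noncomputable def jacDetWithin {d : ℕ} (Ψ : (Fin d → ℝ) → (Fin d → ℝ))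
    (s : Set (Fin d → ℝ)) : (Fin d → ℝ) → ℝ :=
  fun t => Matrix.det (Matrix.of fun i j : Fin d => fderivWithin ℝ Ψ s t (Pi.single j 1) i)

/-- Partial derivative in the `j`-th coordinate direction. -/
noncomputable def pderivCoord {d : ℕ} (j : Fin d) (g : (Fin d → ℝ) → ℝ) :
    (Fin d → ℝ) → ℝ :=
  fun x => fderiv ℝ g x (Pi.single j 1)

/-- Iterated partial derivative `∂^α`. -/
noncomputable def mpderiv {d : ℕ} (α : Fin d → ℕ) (g : (Fin d → ℝ) → ℝ) :
    (Fin d → ℝ) → ℝ :=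
  (List.finRange d).foldl (fun h j => (pderivCoord j)^[α j] h) g

/-- `deg J` for `J ∈ {1,…,k}^d`: the number of occurrences of each letter. -/
def degJ {d k : ℕ} (J : Fin d → Fin k) : Fin k → ℕ :=
  fun i => ∑ ℓ, if J ℓ = i then 1 else 0

/-- `deg_J α`, whose `i`-th entry is `Σ_{ℓ : J_ℓ = i} α_ℓ`. -/
def degJα {d k : ℕ} (J : Fin d → Fin k) (α : Fin d → ℕ) : Fin k → ℕ :=
  fun i => ∑ ℓ, if J ℓ = i then α ℓ else 0

/-- The support of a Borel measure: the set of points all of whose open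
neighborhoods have positive measure. -/
def measSupport {X : Type*} [TopologicalSpace X] [MeasurableSpace X] (μ : Measure X) : Set X :=
  {x | ∀ s : Set X, IsOpen s → x ∈ s → μ s ≠ 0}

end

section StatementEightAux
open Finset

namespace S8

variable {k : ℕ}

/-- The generator set of the orthant hull. -/
def gen (S : Set (Fin k → ℕ)) : Set (Fin k → ℝ) :=
  {p : Fin k → ℝ | ∃ b ∈ S, ∀ i, (b i : ℝ) ≤ p i}

lemma orthantHull_def (S : Set (Fin k → ℕ)) : orthantHull S = convexHull ℝ (gen S) := rfl

lemma mem_orthantHull_of_combo {S : Set (Fin k → ℕ)} {x : Fin k → ℝ}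
    {ι : Type} (t : Finset ι) (w : ι → ℝ) (z : ι → Fin k → ℕ)
    (hw0 : ∀ j ∈ t, 0 ≤ w j) (hw1 : ∑ j ∈ t, w j = 1) (hz : ∀ j ∈ t, z j ∈ S)
    (hle : ∀ i, ∑ j ∈ t, w j * (z j i : ℝ) ≤ x i) :
    x ∈ orthantHull S := by
  classical
  set r : Fin k → ℝ := fun i => x i - ∑ j ∈ t, w j * (z j i : ℝ) with hr
  have hr0 : ∀ i, 0 ≤ r i := fun i => by
    have := hle i; simp only [hr]; linarith
  set p : ι → (Fin k → ℝ) := fun j => fun i => (z j i : ℝ) + r i with hp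
  have hpmem : ∀ j ∈ t, p j ∈ gen S := fun j hj =>
    ⟨z j, hz j hj, fun i => le_add_of_nonneg_right (hr0 i)⟩
  have hcm := Finset.centerMass_mem_convexHull t hw0 (by rw [hw1]; norm_num) hpmem
  rw [Finset.centerMass_eq_of_sum_1 _ _ hw1] at hcm
  rw [orthantHull_def]
  convert hcm using 1
  funext i
  rw [Finset.sum_apply]
  have : ∀ j ∈ t, (w j • p j) i = w j * (z j i : ℝ) + w j * r i := fun j hj => by
    simp [hp, mul_add]
  rw [Finset.sum_congr rfl this, Finset.sum_add_distrib, ← Finset.sum_mul, hw1]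
  simp [hr]

lemma exists_combo_of_mem {S : Set (Fin k → ℕ)} {x : Fin k → ℝ}
    (hx : x ∈ orthantHull S) :
    ∃ (ι : Type) (t : Finset ι) (w : ι → ℝ) (z : ι → Fin k → ℕ),
      (∀ j ∈ t, 0 ≤ w j) ∧ ∑ j ∈ t, w j = 1 ∧ (∀ j ∈ t, z j ∈ S) ∧
      ∀ i, ∑ j ∈ t, w j * (z j i : ℝ) ≤ x i := by
  classical
  rw [orthantHull_def, _root_.convexHull_eq] at hx
  obtain ⟨ι, t, w, p, hw0, hw1, hp, hx⟩ := hx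
  choose! b hbS hble using hp
  refine ⟨ι, t, w, b, hw0, hw1, hbS, fun i => ?_⟩
  have hxi : x i = ∑ j ∈ t, w j * p j i := by
    rw [← hx, Finset.centerMass_eq_of_sum_1 _ _ hw1, Finset.sum_apply]
    exact Finset.sum_congr rfl fun j hj => by simp [smul_eq_mul]
  rw [hxi]
  exact Finset.sum_le_sum fun j hj => mul_le_mul_of_nonneg_left (hble j hj i) (hw0 j hj)

lemma orthantHull_mono_dom {B A : Set (Fin k → ℕ)}
    (h : ∀ b ∈ B, ∃ a ∈ A, ∀ i, a i ≤ b i) : orthantHull B ⊆ orthantHull A := by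
  rw [orthantHull_def, orthantHull_def]
  apply convexHull_mono
  rintro p ⟨b, hb, hbp⟩
  obtain ⟨a, ha, hab⟩ := h b hb
  exact ⟨a, ha, fun i => le_trans (by exact_mod_cast hab i) (hbp i)⟩

lemma mem_orthantHull_of_le {S : Set (Fin k → ℕ)} {x y : Fin k → ℝ}
    (hx : x ∈ orthantHull S) (hxy : ∀ i, x i ≤ y i) : y ∈ orthantHull S := by
  obtain ⟨ι, t, w, z, hw0, hw1, hz, hle⟩ := exists_combo_of_mem hx
  exact mem_orthantHull_of_combo t w z hw0 hw1 hz fun i => (hle i).trans (hxy i)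

open Pointwise

variable {k : ℕ}

lemma exists_basis (C : Set (Fin k → ℕ)) :
    ∃ F : Finset (Fin k → ℕ), ↑F ⊆ C ∧ ∀ c ∈ C, ∃ a ∈ F, ∀ i, a i ≤ c i := by
  classical
  set M : Set (Fin k → ℕ) := {c | c ∈ C ∧ ∀ c' ∈ C, c' ≤ c → c' = c} with hM
  have dom : ∀ n : ℕ, ∀ c ∈ C, (∑ i, c i) = n → ∃ a ∈ M, a ≤ c := by
    intro n
    induction n using Nat.strong_induction_on with
    | _ n ih =>
      intro c hc hsum
      by_cases hmin : ∀ c' ∈ C, c' ≤ c → c' = c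
      · exact ⟨c, ⟨hc, hmin⟩, le_refl c⟩
      · push_neg at hmin
        obtain ⟨c', hc', hle, hne⟩ := hmin
        have hlt : ∑ i, c' i < ∑ i, c i := by
          apply Finset.sum_lt_sum (fun i _ => hle i)
          by_contra h
          push_neg at h
          exact hne (funext fun i => le_antisymm (hle i) (h i (Finset.mem_univ i)))
        obtain ⟨a, haM, hac⟩ := ih _ (hsum ▸ hlt) c' hc' rfl
        exact ⟨a, haM, le_trans hac hle⟩
  have hMfin : M.Finite := by
    by_contra hinf
    have f := Set.Infinite.natEmbedding M hinf
    obtain ⟨m, n, hmn, hle⟩ :=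
      wellQuasiOrdered_le (α := Fin k → ℕ) (fun n => ↑(f n))
    have heq : (↑(f m) : Fin k → ℕ) = ↑(f n) := (f n).2.2 _ (f m).2.1 hle
    exact absurd (f.injective (Subtype.ext heq)) (Nat.ne_of_lt hmn)
  refine ⟨hMfin.toFinset, fun c hc => ((hMfin.mem_toFinset.mp hc).1 : c ∈ C), fun c hc => ?_⟩
  obtain ⟨a, haM, hac⟩ := dom _ c hc rfl
  exact ⟨a, hMfin.mem_toFinset.mpr haM, fun i => hac i⟩

lemma isClosed_compact_add_closed {K O : Set (Fin k → ℝ)} (hK : IsCompact K)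
    (hO : IsClosed O) : IsClosed (K + O) := by
  rw [← isSeqClosed_iff_isClosed]
  intro u L hu hL
  have hmem : ∀ n, ∃ c ∈ K, ∃ o ∈ O, c + o = u n := fun n => Set.mem_add.mp (hu n)
  choose c hcK o hoO hsum using hmem
  obtain ⟨a, haK, φ, hφ, hca⟩ := hK.isSeqCompact hcK
  have huφ : Filter.Tendsto (u ∘ φ) Filter.atTop (nhds L) := hL.comp hφ.tendsto_atTop
  have hoφ : Filter.Tendsto (fun n => u (φ n) - c (φ n)) Filter.atTop (nhds (L - a)) :=
    huφ.sub hca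
  have hLa : L - a ∈ O := by
    refine hO.isSeqClosed (fun n => ?_) hoφ
    rw [← hsum (φ n)]
    simpa using hoO (φ n)
  exact ⟨a, haK, L - a, hLa, by module⟩

end S8

open Pointwise

namespace S8

variable {k : ℕ}

lemma isClosed_orthantHull (A : Finset (Fin k → ℕ)) :
    IsClosed (orthantHull (↑A : Set (Fin k → ℕ))) := by
  classical
  set X : Set (Fin k → ℝ) := (fun (b : Fin k → ℕ) (i : Fin k) => (b i : ℝ)) '' ↑A with hX
  set Oo : Set (Fin k → ℝ) := {x | ∀ i, 0 ≤ x i} with hOo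
  have hOoc : Convex ℝ Oo := by
    have : Oo = Set.pi Set.univ (fun _ : Fin k => Set.Ici (0:ℝ)) := by
      ext x; simp [hOo, Set.mem_pi, Pi.le_def]
    rw [this]
    exact convex_pi (fun i _ => convex_Ici 0)
  have hOocl : IsClosed Oo := by
    have : Oo = Set.pi Set.univ (fun _ : Fin k => Set.Ici (0:ℝ)) := by
      ext x; simp [hOo, Set.mem_pi, Pi.le_def]
    rw [this]
    exact isClosed_set_pi (fun i _ => isClosed_Ici)
  have hgen : gen (↑A : Set (Fin k → ℕ)) = X + Oo := by
    ext p
    constructor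
    · rintro ⟨b, hb, hbp⟩
      refine Set.mem_add.mpr ⟨_, ⟨b, hb, rfl⟩, fun i => p i - (b i : ℝ), fun i => by
        simpa using hbp i, ?_⟩
      funext i; simp
    · rintro ⟨x, ⟨b, hb, rfl⟩, y, hy, rfl⟩
      exact ⟨b, hb, fun i => le_add_of_nonneg_right (hy i)⟩
  have hXfin : X.Finite := Set.Finite.image _ A.finite_toSet
  have : orthantHull (↑A : Set (Fin k → ℕ)) = convexHull ℝ X + Oo := by
    rw [orthantHull_def, hgen, convexHull_add, convexHull_eq_self.mpr hOoc]
  rw [this]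
  exact isClosed_compact_add_closed (hXfin.isCompact_convexHull ℝ) hOocl

lemma sep_exists (b₀ : Fin k → ℝ) (hb₀ : ∀ i, 0 ≤ b₀ i) (A : Finset (Fin k → ℕ))
    (hA : b₀ ∉ orthantHull (↑A : Set (Fin k → ℕ))) :
    ∃ (ε : ℝ) (v : Fin k → ℝ), 0 < ε ∧ (∀ i, ε < v i ∧ v i ≤ 1) ∧
      ∀ p ∈ orthantHull (↑A : Set (Fin k → ℕ)),
        (∑ i, v i * b₀ i) + ε < ∑ i, v i * p i := by
  classical
  rcases A.eq_empty_or_nonempty with rfl | hAne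
  · refine ⟨1/2, fun _ => 1, by norm_num, fun i => by norm_num, fun p hp => ?_⟩
    exfalso
    rw [orthantHull_def] at hp
    have : gen (↑(∅ : Finset (Fin k → ℕ)) : Set (Fin k → ℕ)) = ∅ := by
      ext q; simp [gen]
    rw [this, convexHull_empty] at hp
    exact hp
  · obtain ⟨f, u, hfb, hfp⟩ := geometric_hahn_banach_point_closed
      (convex_convexHull ℝ _) (isClosed_orthantHull A) hA
    set v : Fin k → ℝ := fun i => f (fun j => if i = j then (1:ℝ) else 0) with hv
    have hfeval : ∀ x : Fin k → ℝ, f x = ∑ i, x i * v i := by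
      intro x
      have hx := pi_eq_sum_univ x
      calc f x = f (∑ i, x i • fun j => if i = j then (1:ℝ) else 0) := by rw [← hx]
      _ = ∑ i, x i * v i := by
          rw [map_sum]
          exact Finset.sum_congr rfl fun i _ => by rw [f.map_smul]; simp [hv, smul_eq_mul]
    -- membership of points of A
    have hmemA : ∀ a ∈ A, (fun i => (a i : ℝ)) ∈ orthantHull (↑A : Set (Fin k → ℕ)) :=
      fun a ha => subset_convexHull ℝ _ ⟨a, ha, fun i => le_rfl⟩
    -- nonnegativity of v
    have hv0 : ∀ i, 0 ≤ v i := by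
      intro i
      by_contra hneg
      push_neg at hneg
      obtain ⟨a₀, ha₀⟩ := hAne
      set p₀ : Fin k → ℝ := fun j => (a₀ j : ℝ) with hp₀
      have hp₀mem : p₀ ∈ orthantHull (↑A : Set (Fin k → ℕ)) := hmemA a₀ ha₀
      have hup₀ : u < f p₀ := hfp _ hp₀mem
      set r : ℝ := (u - f p₀) / v i with hr
      have hrpos : 0 < r := div_pos_of_neg_of_neg (by linarith) hneg
      have hmem2 : (p₀ + r • fun j => if i = j then (1:ℝ) else 0) ∈
          orthantHull (↑A : Set (Fin k → ℕ)) := by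
        refine mem_orthantHull_of_le hp₀mem fun j => ?_
        have : (0:ℝ) ≤ r * (if i = j then (1:ℝ) else 0) := by
          positivity
        simp only [Pi.add_apply, Pi.smul_apply, smul_eq_mul]
        linarith
      have hcontr := hfp _ hmem2
      rw [map_add, f.map_smul] at hcontr
      have : f p₀ + r * v i = u := by
        rw [hr, div_mul_cancel₀ _ (ne_of_lt hneg)]; ring
      simp only [smul_eq_mul] at hcontr
      rw [show f (fun j => if i = j then (1:ℝ) else 0) = v i from rfl] at hcontr
      linarith
    -- the packaging
    set L : ℝ := ∑ i, b₀ i with hL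
    have hL0 : 0 ≤ L := Finset.sum_nonneg fun i _ => hb₀ i
    have hgap : 0 < u - f b₀ := by linarith
    set η : ℝ := (u - f b₀) / (2 * (L + 1)) with hη
    have hηpos : 0 < η := by positivity
    set c : ℝ := 1 + η + ∑ i, v i with hc
    have hvsum0 : 0 ≤ ∑ i, v i := Finset.sum_nonneg fun i _ => hv0 i
    have hcpos : 0 < c := by positivity
    set v₀ : Fin k → ℝ := fun i => (v i + η) / c with hv₀
    set γ : ℝ := (u - f b₀) / (2 * c) with hγ
    have hγpos : 0 < γ := by positivity
    set ε : ℝ := min (γ / 2) (η / (2 * c)) with hε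
    have hεpos : 0 < ε := lt_min (by positivity) (by positivity)
    have hv₀lb : ∀ i, η / c ≤ v₀ i := fun i => by
      have h1 : η ≤ v i + η := by linarith [hv0 i]
      exact (div_le_div_iff_of_pos_right hcpos).mpr h1
    have hv₀0 : ∀ i, 0 ≤ v₀ i := fun i => le_trans (by positivity) (hv₀lb i)
    have hεlt : ∀ i, ε < v₀ i := by
      intro i
      have h2 : η / (2 * c) < η / c := by
        rw [div_lt_div_iff₀ (by positivity) hcpos]
        nlinarith
      exact lt_of_le_of_lt (min_le_right _ _) (lt_of_lt_of_le h2 (hv₀lb i))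
    have hv₀le1 : ∀ i, v₀ i ≤ 1 := by
      intro i
      rw [hv₀, div_le_one hcpos]
      have : v i ≤ ∑ j, v j := Finset.single_le_sum (fun j _ => hv0 j) (Finset.mem_univ i)
      simp only [hc]; linarith
    -- auxiliary numeric facts
    have hη2 : η * (2 * (L + 1)) = u - f b₀ := div_mul_cancel₀ _ (by positivity)
    have hγ2 : γ * (2 * c) = u - f b₀ := div_mul_cancel₀ _ (by positivity)
    have hsum_v₀b₀ : ∑ i, v₀ i * b₀ i = ((f b₀) + η * L) / c := by
      have hterm : ∀ i ∈ Finset.univ, v₀ i * b₀ i = (b₀ i * v i + η * b₀ i) / c :=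
        fun i _ => by rw [hv₀]; ring
      rw [Finset.sum_congr rfl hterm, ← Finset.sum_div, Finset.sum_add_distrib,
        ← Finset.mul_sum, ← hL, ← hfeval b₀]
    -- key bound at points of A
    have hkey : ∀ a ∈ A, (∑ i, v₀ i * b₀ i) + 2 * ε ≤ ∑ i, v₀ i * (a i : ℝ) := by
      intro a ha
      have hfa : u < f (fun i => (a i : ℝ)) := hfp _ (hmemA a ha)
      have hfaeval : f (fun i => (a i : ℝ)) = ∑ i, (a i : ℝ) * v i := hfeval _
      have h1 : ∑ i, v₀ i * (a i : ℝ) = ((∑ i, (a i : ℝ) * v i) + η * ∑ i, (a i : ℝ)) / c := by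
        have hterm : ∀ i ∈ Finset.univ, v₀ i * (a i : ℝ) = ((a i : ℝ) * v i + η * (a i : ℝ)) / c :=
          fun i _ => by rw [hv₀]; ring
        rw [Finset.sum_congr rfl hterm, ← Finset.sum_div, Finset.sum_add_distrib,
          ← Finset.mul_sum]
      have ha0 : 0 ≤ ∑ i, (a i : ℝ) := Finset.sum_nonneg fun i _ => Nat.cast_nonneg _
      have hεγ : 2 * ε ≤ γ := by
        have := min_le_left (γ / 2) (η / (2 * c))
        rw [hε]; linarith [this]
      have hnum : (f b₀ + η * L) + 2 * ε * c ≤ (∑ i, (a i : ℝ) * v i) + η * ∑ i, (a i : ℝ) := by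
        have hεc : 2 * ε * c ≤ γ * c := by nlinarith
        nlinarith [hfa, hfaeval]
      rw [hsum_v₀b₀, h1]
      have := (div_le_div_iff_of_pos_right hcpos).mpr hnum
      rw [add_div] at this
      have hεcc : 2 * ε * c / c = 2 * ε := by field_simp
      linarith [this, hεcc.le, hεcc.ge]
    -- separation for arbitrary points of the hull
    refine ⟨ε, v₀, hεpos, fun i => ⟨hεlt i, hv₀le1 i⟩, fun p hp => ?_⟩
    obtain ⟨ι, t, w, z, hw0, hw1, hz, hle⟩ := exists_combo_of_mem hp
    have hstep1 : ∑ j ∈ t, w j * ((∑ i, v₀ i * b₀ i) + 2 * ε) ≤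
        ∑ j ∈ t, w j * (∑ i, v₀ i * (z j i : ℝ)) := by
      refine Finset.sum_le_sum fun j hj => mul_le_mul_of_nonneg_left ?_ (hw0 j hj)
      exact hkey (z j) (hz j hj)
    have hswap : ∑ j ∈ t, w j * (∑ i, v₀ i * (z j i : ℝ)) =
        ∑ i, v₀ i * (∑ j ∈ t, w j * (z j i : ℝ)) := by
      calc ∑ j ∈ t, w j * (∑ i, v₀ i * (z j i : ℝ))
          = ∑ j ∈ t, ∑ i, w j * (v₀ i * (z j i : ℝ)) := by simp_rw [Finset.mul_sum]
        _ = ∑ i, ∑ j ∈ t, w j * (v₀ i * (z j i : ℝ)) := Finset.sum_comm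
        _ = ∑ i, v₀ i * (∑ j ∈ t, w j * (z j i : ℝ)) := by
            refine Finset.sum_congr rfl fun i _ => ?_
            rw [Finset.mul_sum]
            exact Finset.sum_congr rfl fun j _ => by ring
    have hstep2 : ∑ i, v₀ i * (∑ j ∈ t, w j * (z j i : ℝ)) ≤ ∑ i, v₀ i * p i := by
      refine Finset.sum_le_sum fun i _ => mul_le_mul_of_nonneg_left (hle i) (hv₀0 i)
    have hconst : ∑ j ∈ t, w j * ((∑ i, v₀ i * b₀ i) + 2 * ε) =
        (∑ i, v₀ i * b₀ i) + 2 * ε := by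
      rw [← Finset.sum_mul, hw1, one_mul]
    have : (∑ i, v₀ i * b₀ i) + 2 * ε ≤ ∑ i, v₀ i * p i := by
      rw [← hconst]
      calc ∑ j ∈ t, w j * ((∑ i, v₀ i * b₀ i) + 2 * ε)
          ≤ ∑ j ∈ t, w j * (∑ i, v₀ i * (z j i : ℝ)) := hstep1
        _ = ∑ i, v₀ i * (∑ j ∈ t, w j * (z j i : ℝ)) := hswap
        _ ≤ ∑ i, v₀ i * p i := hstep2
    linarith

/-- Coordinatewise truncation. -/
def tr (R : ℕ) (b : Fin k → ℕ) : Fin k → ℕ := fun i => min (b i) R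

lemma exists_R (k : ℕ) (hk : 1 ≤ k) (b₀ : Fin k → ℝ) (hb₀ : ∀ i, 0 ≤ b₀ i) :
    ∃ R : ℕ, ∀ B : Set (Fin k → ℕ), b₀ ∉ orthantHull B →
      b₀ ∉ orthantHull (tr R '' B) := by
  classical
  haveI hFinNe : Nonempty (Fin k) := ⟨⟨0, hk⟩⟩
  by_contra hcon
  push_neg at hcon
  choose 𝔅 h1 h2 using hcon
  set U : Ultrafilter ℕ := Filter.hyperfilter ℕ with hU
  set C : Set (Fin k → ℕ) := {c | {R | c ∈ 𝔅 R} ∈ U} with hC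
  set L : ℝ := ∑ i, b₀ i with hL
  have hL0 : 0 ≤ L := Finset.sum_nonneg fun i _ => hb₀ i
  have hb₀L : ∀ i, b₀ i ≤ L := fun i =>
    Finset.single_le_sum (fun j _ => hb₀ j) (Finset.mem_univ i)
  -- b₀ is not in the hull of C
  have hb₀C : b₀ ∉ orthantHull C := by
    intro hmem
    obtain ⟨ι, t, w, z, hw0, hw1, hz, hle⟩ := exists_combo_of_mem hmem
    have hS : (⋂ j ∈ t, {R | z j ∈ 𝔅 R}) ∈ U :=
      (Filter.biInter_finset_mem t).mpr fun j hj => hz j hj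
    obtain ⟨R, hR⟩ := Filter.nonempty_of_mem hS
    simp only [Set.mem_iInter] at hR
    exact h1 R (mem_orthantHull_of_combo t w z hw0 hw1 (fun j hj => hR j hj) hle)
  -- Dickson basis for C
  obtain ⟨F, hFC, hFdom⟩ := exists_basis C
  -- the key approximation
  have key : ∀ m : ℕ, 2 * L + 1 ≤ (m : ℝ) →
      ∃ q : {a // a ∈ F} → ℝ, q ∈ stdSimplex ℝ {a // a ∈ F} ∧
        ∀ i, (∑ a : {a // a ∈ F}, q a * ((a : Fin k → ℕ) i : ℝ)) ≤ b₀ i + 2 * L ^ 2 / m := by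
    intro m hm
    have hm0 : (0:ℝ) < m := by linarith
    -- choose a good index R
    have hAgr : ∀ c : Fin k → ℕ, {R | c ∈ 𝔅 R ↔ c ∈ C} ∈ U := by
      intro c
      by_cases hc : c ∈ C
      · have : {R | c ∈ 𝔅 R ↔ c ∈ C} = {R | c ∈ 𝔅 R} := by
          ext R; simp [hc]
        rw [this]; exact hc
      · have : {R | c ∈ 𝔅 R ↔ c ∈ C} = {R | c ∈ 𝔅 R}ᶜ := by
          ext R; simp [hc]
        rw [this]
        exact Ultrafilter.compl_mem_iff_notMem.mpr hc
    have hboxfin : ({c : Fin k → ℕ | ∀ i, c i ≤ m}).Finite := by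
      apply Set.Finite.subset (Set.finite_Icc (0 : Fin k → ℕ) (fun _ => m))
      intro c hc
      rw [Set.mem_Icc]
      exact ⟨fun i => Nat.zero_le _, fun i => hc i⟩
    have hSR : ((⋂ c ∈ {c : Fin k → ℕ | ∀ i, c i ≤ m}, {R | c ∈ 𝔅 R ↔ c ∈ C}) ∩
        {R | m < R}) ∈ U := by
      apply Filter.inter_mem
      · exact (Filter.biInter_mem hboxfin).mpr fun c _ => hAgr c
      · exact Nat.hyperfilter_le_atTop (Filter.mem_atTop (m + 1))
    obtain ⟨R, hR⟩ := Filter.nonempty_of_mem hSR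
    obtain ⟨hRagr, hRgt⟩ := hR
    simp only [Set.mem_iInter] at hRagr
    have hRgt' : m < R := hRgt
    -- the combination at level R
    obtain ⟨ι, t, w, z, hw0, hw1, hz, hle⟩ := exists_combo_of_mem (h2 R)
    set sm : Finset ι := t.filter (fun j => ∀ i, z j i ≤ m) with hsm
    set fr : Finset ι := t.filter (fun j => ¬ ∀ i, z j i ≤ m) with hfr
    -- small points are honest members of C
    have hCmem : ∀ j ∈ sm, z j ∈ C := by
      intro j hj
      rw [hsm, Finset.mem_filter] at hj
      obtain ⟨hjt, hjbox⟩ := hj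
      obtain ⟨b, hbB, hbz⟩ := hz j hjt
      have hbz' : b = z j := by
        funext i
        have h1' : min (b i) R = z j i := congrFun hbz i
        have h2' : z j i ≤ m := hjbox i
        rcases le_or_gt (b i) R with h | h
        · rw [min_eq_left h] at h1'; exact h1'
        · rw [min_eq_right h.le] at h1'; omega
      have : z j ∈ 𝔅 R := by rw [← hbz']; exact hbB
      exact (hRagr (z j) hjbox).mp this
    -- mass bound on far points
    have hfar : ∀ j ∈ fr, ∃ i, m < z j i := by
      intro j hj
      rw [hfr, Finset.mem_filter] at hj
      push_neg at hj
      obtain ⟨i, hi⟩ := hj.2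
      exact ⟨i, by omega⟩
    choose! ij hij using hfar
    have hmass : (m : ℝ) * ∑ j ∈ fr, w j ≤ L := by
      have hstep : ∑ j ∈ fr, w j * (m : ℝ) ≤ ∑ j ∈ fr, w j * (z j (ij j) : ℝ) := by
        refine Finset.sum_le_sum fun j hj => ?_
        have := hij j hj
        have hw := hw0 j (Finset.mem_of_mem_filter j hj)
        have : (m : ℝ) ≤ (z j (ij j) : ℝ) := by exact_mod_cast this.le
        exact mul_le_mul_of_nonneg_left this hw
      have hregroup : ∑ j ∈ fr, w j * (z j (ij j) : ℝ) =
          ∑ i, ∑ j ∈ fr.filter (fun j => ij j = i), w j * (z j (ij j) : ℝ) :=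
        (Finset.sum_fiberwise_of_maps_to (fun j _ => Finset.mem_univ (ij j)) _).symm
      have hinner : ∀ i, ∑ j ∈ fr.filter (fun j => ij j = i), w j * (z j (ij j) : ℝ) ≤ b₀ i := by
        intro i
        have heq : ∑ j ∈ fr.filter (fun j => ij j = i), w j * (z j (ij j) : ℝ) =
            ∑ j ∈ fr.filter (fun j => ij j = i), w j * (z j i : ℝ) := by
          refine Finset.sum_congr rfl fun j hj => ?_
          rw [(Finset.mem_filter.mp hj).2]
        rw [heq]
        refine le_trans (Finset.sum_le_sum_of_subset_of_nonneg ?_ ?_) (hle i)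
        · exact (Finset.filter_subset _ _).trans (Finset.filter_subset _ _)
        · intro j hjt _
          exact mul_nonneg (hw0 j hjt) (Nat.cast_nonneg _)
      calc (m : ℝ) * ∑ j ∈ fr, w j = ∑ j ∈ fr, w j * (m : ℝ) := by
            rw [Finset.mul_sum]
            exact Finset.sum_congr rfl fun j _ => mul_comm _ _
        _ ≤ ∑ j ∈ fr, w j * (z j (ij j) : ℝ) := hstep
        _ = ∑ i, ∑ j ∈ fr.filter (fun j => ij j = i), w j * (z j (ij j) : ℝ) := hregroup
        _ ≤ ∑ i, b₀ i := Finset.sum_le_sum fun i _ => hinner i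
        _ = L := hL.symm
    set δ : ℝ := ∑ j ∈ fr, w j with hδ
    set w' : ℝ := ∑ j ∈ sm, w j with hw'
    have hδ0 : 0 ≤ δ := Finset.sum_nonneg fun j hj => hw0 j (Finset.mem_of_mem_filter j hj)
    have hw'0 : 0 ≤ w' := Finset.sum_nonneg fun j hj => hw0 j (Finset.mem_of_mem_filter j hj)
    have hsplit : w' + δ = 1 := by
      rw [hw', hδ, hsm, hfr]
      rw [Finset.sum_filter_add_sum_filter_not]
      exact hw1
    have hδle : δ ≤ L / m := by
      rw [le_div_iff₀ hm0]; linarith [hmass]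
    have hLm : L / (m:ℝ) ≤ 1/2 := by
      rw [div_le_iff₀ hm0]; linarith
    have hw'half : 1/2 ≤ w' := by linarith [hδle, hLm]
    have hw'pos : 0 < w' := by linarith
    -- domination of small points by the basis
    have hdom : ∀ j ∈ sm, ∃ a ∈ F, ∀ i, a i ≤ z j i := fun j hj => hFdom (z j) (hCmem j hj)
    choose! g hgF hgle using hdom
    refine ⟨fun a => (∑ j ∈ sm.filter (fun j => g j = ↑a), w j) / w',
      ⟨fun a => div_nonneg (Finset.sum_nonneg fun j hj =>
        hw0 j (Finset.mem_of_mem_filter j (Finset.mem_of_mem_filter j hj))) hw'0, ?_⟩, ?_⟩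
    · -- total mass is one
      rw [← Finset.sum_div, div_eq_one_iff_eq (ne_of_gt hw'pos)]
      calc ∑ a : {a // a ∈ F}, ∑ j ∈ sm.filter (fun j => g j = ↑a), w j
          = ∑ a ∈ F, ∑ j ∈ sm.filter (fun j => g j = a), w j :=
            Finset.sum_coe_sort F (fun a => ∑ j ∈ sm.filter (fun j => g j = a), w j)
        _ = ∑ j ∈ sm, w j := Finset.sum_fiberwise_of_maps_to (fun j hj => hgF j hj) w
    · -- the coordinate bounds
      intro i
      have hq : (∑ a : {a // a ∈ F},
          (∑ j ∈ sm.filter (fun j => g j = ↑a), w j) / w' * ((a : Fin k → ℕ) i : ℝ))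
          = (∑ j ∈ sm, w j * (g j i : ℝ)) / w' := by
        have e1 : ∀ a : {a // a ∈ F},
            (∑ j ∈ sm.filter (fun j => g j = ↑a), w j) / w' * ((a : Fin k → ℕ) i : ℝ)
            = (∑ j ∈ sm.filter (fun j => g j = ↑a), w j * ((g j) i : ℝ)) / w' := by
          intro a
          rw [div_mul_eq_mul_div, Finset.sum_mul]
          congr 1
          refine Finset.sum_congr rfl fun j hj => ?_
          rw [(Finset.mem_filter.mp hj).2]
        rw [Finset.sum_congr rfl (fun a _ => e1 a), ← Finset.sum_div]
        congr 1
        calc ∑ a : {a // a ∈ F}, ∑ j ∈ sm.filter (fun j => g j = ↑a), w j * ((g j) i : ℝ)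
            = ∑ a ∈ F, ∑ j ∈ sm.filter (fun j => g j = a), w j * ((g j) i : ℝ) :=
              Finset.sum_coe_sort F (fun a => ∑ j ∈ sm.filter (fun j => g j = a), w j * ((g j) i : ℝ))
          _ = ∑ j ∈ sm, w j * ((g j) i : ℝ) :=
              Finset.sum_fiberwise_of_maps_to (fun j hj => hgF j hj) _
      rw [hq]
      have hnum : ∑ j ∈ sm, w j * (g j i : ℝ) ≤ b₀ i := by
        have hstep : ∑ j ∈ sm, w j * (g j i : ℝ) ≤ ∑ j ∈ sm, w j * (z j i : ℝ) := by
          refine Finset.sum_le_sum fun j hj => ?_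
          exact mul_le_mul_of_nonneg_left
            (by exact_mod_cast (hgle j hj i : g j i ≤ z j i))
            (hw0 j (Finset.mem_of_mem_filter j hj))
        refine hstep.trans (le_trans
          (Finset.sum_le_sum_of_subset_of_nonneg (Finset.filter_subset _ _) ?_) (hle i))
        intro j hjt _
        exact mul_nonneg (hw0 j hjt) (Nat.cast_nonneg _)
      have hb0i : 0 ≤ b₀ i := hb₀ i
      rw [div_le_iff₀ hw'pos]
      have e2 : b₀ i * δ ≤ L * (L / m) := mul_le_mul (hb₀L i) hδle hδ0 hL0
      have e4 : L * (L / m) = L ^ 2 / m := by field_simp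
      have e6 : b₀ i * w' + b₀ i * δ = b₀ i := by rw [← mul_add, hsplit, mul_one]
      have e8 : L ^ 2 / m ≤ 2 * L ^ 2 / m * w' := by
        have h12 : 2 * L ^ 2 / m * (1/2) ≤ 2 * L ^ 2 / m * w' :=
          mul_le_mul_of_nonneg_left hw'half (by positivity)
        calc L ^ 2 / m = 2 * L ^ 2 / m * (1/2) := by ring
          _ ≤ 2 * L ^ 2 / m * w' := h12
      linarith [hnum, e2, e4.le, e4.ge, e6, e8]
  -- minimize the excess functional over the simplex on F
  obtain ⟨m₀, hm₀⟩ := exists_nat_gt (2*L + 1)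
  obtain ⟨q₀, hq₀S, _⟩ := key m₀ hm₀.le
  set ψ : ({a // a ∈ F} → ℝ) → ℝ :=
    fun q => ∑ i, max 0 ((∑ a : {a // a ∈ F}, q a * ((a : Fin k → ℕ) i : ℝ)) - b₀ i) with hψ
  have hψcont : Continuous ψ := by
    apply continuous_finset_sum
    intro i _
    apply Continuous.max continuous_const
    apply Continuous.sub ?_ continuous_const
    apply continuous_finset_sum
    intro a _
    exact (continuous_apply a).mul continuous_const
  obtain ⟨qs, hqsS, hmin⟩ :=
    (isCompact_stdSimplex ℝ {a // a ∈ F}).exists_isMinOn ⟨q₀, hq₀S⟩ hψcont.continuousOn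
  have hψnonneg : 0 ≤ ψ qs := Finset.sum_nonneg fun i _ => le_max_left _ _
  have hψle : ∀ ε : ℝ, 0 < ε → ψ qs ≤ ε := by
    intro ε hε
    obtain ⟨m, hmgt⟩ := exists_nat_gt (max (2*L+1) ((k : ℝ) * (2 * L^2) / ε))
    have hm1 : 2*L+1 ≤ (m:ℝ) := le_of_lt (lt_of_le_of_lt (le_max_left _ _) hmgt)
    have hm0 : (0:ℝ) < m := by linarith
    obtain ⟨q, hqS, hqle⟩ := key m hm1
    have h1 : ψ q ≤ (k:ℝ) * (2*L^2/m) := by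
      rw [hψ]
      calc ∑ i, max 0 ((∑ a : {a // a ∈ F}, q a * ((a : Fin k → ℕ) i : ℝ)) - b₀ i)
          ≤ ∑ _i : Fin k, 2*L^2/m :=
            Finset.sum_le_sum fun i _ => max_le (by positivity) (by linarith [hqle i])
        _ = (k:ℝ) * (2*L^2/m) := by
            rw [Finset.sum_const, Finset.card_univ, Fintype.card_fin, nsmul_eq_mul]
    have h2 : (k:ℝ) * (2*L^2/m) < ε := by
      have hkML : (k : ℝ) * (2 * L^2) / ε < m := lt_of_le_of_lt (le_max_right _ _) hmgt
      rw [div_lt_iff₀ hε] at hkML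
      rw [mul_div_assoc'] at *
      rw [div_lt_iff₀ hm0]
      nlinarith [hkML]
    exact le_trans (isMinOn_iff.mp hmin q hqS) (le_of_lt (lt_of_le_of_lt h1 h2))
  have hψ0 : ψ qs ≤ 0 := by
    refine le_of_forall_pos_le_add fun ε hε => ?_
    simpa using hψle ε hε
  have hψeq : ψ qs = 0 := le_antisymm hψ0 hψnonneg
  have hcoord : ∀ i, (∑ a : {a // a ∈ F}, qs a * ((a : Fin k → ℕ) i : ℝ)) ≤ b₀ i := by
    intro i
    have hterm := (Finset.sum_eq_zero_iff_of_nonneg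
      (fun i (_ : i ∈ Finset.univ) => le_max_left 0 _)).mp hψeq i (Finset.mem_univ i)
    have : (∑ a : {a // a ∈ F}, qs a * ((a : Fin k → ℕ) i : ℝ)) - b₀ i ≤ 0 := by
      by_contra hpos
      push_neg at hpos
      rw [max_eq_right hpos.le] at hterm
      linarith
    linarith
  exact hb₀C (mem_orthantHull_of_combo (Finset.univ : Finset {a // a ∈ F}) qs
    (fun a => (a : Fin k → ℕ)) (fun a _ => hqsS.1 a) (by simpa using hqsS.2)
    (fun a _ => hFC a.2) hcoord)

end S8


end StatementEightAux

/-- Proposition `P:polytope prop`.  For fixed `b₀ ∈ [0,∞)^k`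
there is a finite (admissible) collection of triples `(ε, v₀, 𝒜)` such that for
every `B ⊆ ℤ_{≥0}^k` with `b₀ ∉ 𝒫(B)` some triple separates `b₀` from `𝒫(B)`
and dominates `𝒫(B)` by `𝒫(𝒜)` with `b₀ ∉ 𝒫(𝒜)`. -/
theorem statement8
    (k : ℕ) (hk : 1 ≤ k) (b₀ : Fin k → ℝ) (hb₀ : ∀ i, 0 ≤ b₀ i) :
    ∃ T : Finset (ℝ × (Fin k → ℝ) × Finset (Fin k → ℕ)),
      (∀ t ∈ T, 0 < t.1 ∧ (∀ i, t.1 < t.2.1 i ∧ t.2.1 i ≤ 1) ∧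
        b₀ ∉ orthantHull (↑t.2.2 : Set (Fin k → ℕ))) ∧
      ∀ B : Set (Fin k → ℕ), b₀ ∉ orthantHull B →
        ∃ t ∈ T,
          (∀ p ∈ orthantHull B, (∑ i, t.2.1 i * b₀ i) + t.1 < ∑ i, t.2.1 i * p i) ∧
          orthantHull B ⊆ orthantHull (↑t.2.2 : Set (Fin k → ℕ)) := by
  classical
  obtain ⟨R, hR⟩ := S8.exists_R k hk b₀ hb₀
  -- the chosen separation data for each finite A, with a safe default
  have pick : ∀ A : Finset (Fin k → ℕ), ∃ εv : ℝ × (Fin k → ℝ),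
      (0 < εv.1 ∧ ∀ i, εv.1 < εv.2 i ∧ εv.2 i ≤ 1) ∧
      (b₀ ∉ orthantHull (↑A : Set (Fin k → ℕ)) →
        ∀ p ∈ orthantHull (↑A : Set (Fin k → ℕ)),
          (∑ i, εv.2 i * b₀ i) + εv.1 < ∑ i, εv.2 i * p i) := by
    intro A
    by_cases hA : b₀ ∉ orthantHull (↑A : Set (Fin k → ℕ))
    · obtain ⟨ε, v, h1, h2, h3⟩ := S8.sep_exists b₀ hb₀ A hA
      exact ⟨(ε, v), ⟨h1, h2⟩, fun _ => h3⟩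
    · exact ⟨(1/2, fun _ => 1), ⟨by norm_num, fun i => by norm_num⟩, fun h => (hA h).elim⟩
  choose εv hεv1 hεv2 using pick
  set Ubox : Finset (Fin k → ℕ) :=
    (Set.finite_Icc (0 : Fin k → ℕ) (fun _ => R)).toFinset with hUbox
  set Tgood : Finset (Finset (Fin k → ℕ)) :=
    Ubox.powerset.filter (fun A => b₀ ∉ orthantHull (↑A : Set (Fin k → ℕ))) with hTgood
  refine ⟨Tgood.image (fun A => ((εv A).1, (εv A).2, A)), ?_, ?_⟩
  · intro t ht
    obtain ⟨A, hA, rfl⟩ := Finset.mem_image.mp ht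
    have hAnot : b₀ ∉ orthantHull (↑A : Set (Fin k → ℕ)) :=
      (Finset.mem_filter.mp hA).2
    exact ⟨(hεv1 A).1, (hεv1 A).2, hAnot⟩
  · intro B hB
    have hsub : S8.tr R '' B ⊆ Set.Icc (0 : Fin k → ℕ) (fun _ => R) := by
      rintro _ ⟨b, _, rfl⟩
      rw [Set.mem_Icc]
      exact ⟨fun i => Nat.zero_le _, fun i => min_le_right _ _⟩
    have hfin : (S8.tr R '' B).Finite :=
      Set.Finite.subset (Set.finite_Icc (0 : Fin k → ℕ) (fun _ => R)) hsub
    set AF : Finset (Fin k → ℕ) := hfin.toFinset with hAF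
    have hAFcoe : (↑AF : Set (Fin k → ℕ)) = S8.tr R '' B := hfin.coe_toFinset
    have hAnot : b₀ ∉ orthantHull (↑AF : Set (Fin k → ℕ)) := by
      rw [hAFcoe]; exact hR B hB
    have hAFmem : AF ∈ Tgood := by
      rw [hTgood, Finset.mem_filter, Finset.mem_powerset]
      refine ⟨?_, hAnot⟩
      intro a ha
      rw [hUbox, Set.Finite.mem_toFinset]
      exact hsub (by rw [← hAFcoe]; exact_mod_cast ha)
    have hdom : orthantHull B ⊆ orthantHull (↑AF : Set (Fin k → ℕ)) := by
      apply S8.orthantHull_mono_dom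
      intro b hb
      refine ⟨S8.tr R b, ?_, fun i => min_le_left _ _⟩
      rw [hAFcoe]
      exact ⟨b, hb, rfl⟩
    refine ⟨((εv AF).1, (εv AF).2, AF), Finset.mem_image_of_mem _ hAFmem, ?_, hdom⟩
    intro p hp
    exact hεv2 AF hAnot p (hdom hp)
end

section
/- Fix b_0 ∈ [0,∞)^k. If A ⊆ ℤ_{≥0}^k is a finite set and b_0 ∉ P(A), then there exist ε > 0 and v_0 ∈ (ε,1]^k such that v_0 · b_0 + ε < v_0 · p for every p ∈ P(A). -/
open MeasureTheory Metric Set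
open scoped ENNReal NNReal

open Pointwise in
private theorem statement9_aux
    (k : ℕ) (hk : 1 ≤ k) (b₀ : Fin k → ℝ) (hb₀ : ∀ i, 0 ≤ b₀ i)
    (A : Finset (Fin k → ℕ))
    (hA : b₀ ∉ convexHull ℝ {p : Fin k → ℝ | ∃ b ∈ (↑A : Set (Fin k → ℕ)), ∀ i, (b i : ℝ) ≤ p i}) :
    ∃ ε : ℝ, 0 < ε ∧ ∃ v₀ : Fin k → ℝ, (∀ i, ε < v₀ i ∧ v₀ i ≤ 1) ∧
      ∀ p ∈ convexHull ℝ {p : Fin k → ℝ | ∃ b ∈ (↑A : Set (Fin k → ℕ)), ∀ i, (b i : ℝ) ≤ p i},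
        (∑ i, v₀ i * b₀ i) + ε < ∑ i, v₀ i * p i := by
  classical
  set S : Set (Fin k → ℝ) := {p : Fin k → ℝ | ∃ b ∈ (↑A : Set (Fin k → ℕ)), ∀ i, (b i : ℝ) ≤ p i}
    with hS
  set O : Set (Fin k → ℝ) := {q | ∀ i, 0 ≤ q i} with hOdef
  have hOconvex : Convex ℝ O := by
    have h : O = Set.pi Set.univ (fun _ => Set.Ici (0:ℝ)) := by
      ext q
      simp only [hOdef, Set.mem_setOf_eq, Set.mem_pi, Set.mem_univ, Set.mem_Ici,
        forall_true_left]
    rw [h]; exact convex_pi fun i _ => convex_Ici 0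
  have hOclosed : IsClosed O := by
    have h : O = ⋂ i, (fun q : Fin k → ℝ => q i) ⁻¹' Set.Ici 0 := by
      ext q; simp [hOdef]
    rw [h]; exact isClosed_iInter fun i => isClosed_Ici.preimage (continuous_apply i)
  set A' : Set (Fin k → ℝ) := (fun (b : Fin k → ℕ) (i : Fin k) => (b i : ℝ)) '' ↑A with hA'
  have hSeq : S = A' + O := by
    ext p
    constructor
    · rintro ⟨b, hb, hle⟩
      refine ⟨fun i => (b i : ℝ), ⟨b, hb, rfl⟩, p - fun i => (b i : ℝ),
        fun i => sub_nonneg.2 (hle i), by simp⟩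
    · rintro ⟨a, ⟨b, hb, rfl⟩, q, hq, rfl⟩
      exact ⟨b, hb, fun i => le_add_of_nonneg_right (hq i)⟩
  have hHull : convexHull ℝ S = convexHull ℝ A' + O := by
    rw [hSeq, convexHull_add, hOconvex.convexHull_eq]
  by_cases hAe : A = ∅
  · refine ⟨1/2, by norm_num, fun _ => 1, fun i => by norm_num, ?_⟩
    intro p hp
    rw [hHull] at hp
    subst hAe
    simp [hA'] at hp
  -- nonempty case
  obtain ⟨b₁, hb₁⟩ := Finset.nonempty_iff_ne_empty.2 hAe
  have hclosed : IsClosed (convexHull ℝ S) := by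
    rw [hHull]
    exact hOclosed.add_left_of_isCompact ((A.finite_toSet.image _).isCompact_convexHull ℝ)
  obtain ⟨f, u, hfb₀, hfp⟩ := geometric_hahn_banach_point_closed (convex_convexHull ℝ S) hclosed hA
  set e : Fin k → (Fin k → ℝ) := fun i j => if i = j then (1:ℝ) else 0 with he
  set v : Fin k → ℝ := fun i => f (e i) with hv
  have hf_eq : ∀ y : Fin k → ℝ, f y = ∑ i, v i * y i := by
    intro y
    have := LinearMap.pi_apply_eq_sum_univ (f : (Fin k → ℝ) →ₗ[ℝ] ℝ) y
    simp only [ContinuousLinearMap.coe_coe] at this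
    rw [this]
    exact Finset.sum_congr rfl fun i _ => by rw [smul_eq_mul, mul_comm]
  -- recession directions
  have hrec : ∀ p ∈ convexHull ℝ S, ∀ i : Fin k, ∀ t : ℝ, 0 ≤ t →
      p + t • e i ∈ convexHull ℝ S := by
    intro p hp i t ht
    rw [hHull] at hp ⊢
    obtain ⟨a, ha, q, hq, rfl⟩ := hp
    refine ⟨a, ha, q + t • e i, ?_, by ext j; simp only [Pi.add_apply, Pi.smul_apply, smul_eq_mul]; ring⟩
    intro j
    have : (0:ℝ) ≤ t • e i j := by
      simp only [he, smul_eq_mul]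
      split <;> simp [ht]
    exact add_nonneg (hq j) this
  -- a basepoint
  have hp₁ : (fun i => ((b₁ i : ℝ))) ∈ convexHull ℝ S :=
    subset_convexHull ℝ S ⟨b₁, hb₁, fun i => le_refl _⟩
  -- v nonneg
  have hvnn : ∀ i, 0 ≤ v i := by
    intro i
    by_contra hvi
    push_neg at hvi
    set p₀ : Fin k → ℝ := fun i => ((b₁ i : ℝ)) with hp₀
    have hup₀ : u < f p₀ := hfp _ hp₁
    set t : ℝ := (u - f p₀) / v i with htdef
    have ht : 0 < t := div_pos_of_neg_of_neg (by linarith) hvi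
    have hmem := hrec p₀ hp₁ i t ht.le
    have h5 := hfp _ hmem
    have hvei : f (e i) = v i := rfl
    rw [map_add, _root_.map_smul, smul_eq_mul, hvei, htdef,
      div_mul_cancel₀ _ (ne_of_lt hvi)] at h5
    linarith
  -- p nonneg on hull
  have hpnn : ∀ p ∈ convexHull ℝ S, ∀ i, 0 ≤ p i := by
    intro p hp i
    have hsub : convexHull ℝ S ⊆ O := convexHull_min
      (fun x hx => by
        obtain ⟨b, _, hle⟩ := hx
        exact fun j => le_trans (by positivity) (hle j)) hOconvex
    exact hsub hp i
  -- construct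
  set M : ℝ := 2 * (1 + ∑ i, v i) with hM
  have hMpos : 0 < M := by
    have : 0 ≤ ∑ i, v i := Finset.sum_nonneg fun i _ => hvnn i
    rw [hM]; linarith
  have hvM : ∀ i, v i ≤ M / 2 := by
    intro i
    have : v i ≤ ∑ j, v j := Finset.single_le_sum (fun j _ => hvnn j) (Finset.mem_univ i)
    rw [hM]; linarith
  set δ : ℝ := (u - f b₀) / M with hδ
  have hδpos : 0 < δ := div_pos (by linarith) hMpos
  set Sb : ℝ := ∑ i, b₀ i with hSb
  have hSbnn : 0 ≤ Sb := Finset.sum_nonneg fun i _ => hb₀ i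
  set η : ℝ := min (1/2) (δ / (2 * (1 + Sb))) with hη
  have hηpos : 0 < η := lt_min (by norm_num) (div_pos hδpos (by linarith))
  have hηhalf : η ≤ 1/2 := min_le_left _ _
  have hηSb : η * Sb ≤ δ / 2 := by
    have h1 : η ≤ δ / (2 * (1 + Sb)) := min_le_right _ _
    have h2 : η * Sb ≤ δ / (2 * (1 + Sb)) * Sb := mul_le_mul_of_nonneg_right h1 hSbnn
    have h3 : δ / (2 * (1 + Sb)) * Sb ≤ δ / 2 := by
      rw [div_mul_eq_mul_div, div_le_div_iff₀ (by linarith) (by norm_num)]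
      nlinarith
    linarith
  set w : Fin k → ℝ := fun i => v i / M + η with hw
  have hsum : ∀ y : Fin k → ℝ, ∑ i, w i * y i = f y / M + η * ∑ i, y i := by
    intro y
    rw [hf_eq y, Finset.sum_div, Finset.mul_sum]
    rw [← Finset.sum_add_distrib]
    refine Finset.sum_congr rfl fun i _ => ?_
    rw [hw]
    field_simp
  refine ⟨min (η/2) (δ/2), lt_min (by linarith) (by linarith), w, ?_, ?_⟩
  · intro i
    constructor
    · have h1 : min (η/2) (δ/2) ≤ η/2 := min_le_left _ _
      have h2 : 0 ≤ v i / M := div_nonneg (hvnn i) hMpos.le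
      rw [hw]; dsimp only; linarith
    · have h1 : v i / M ≤ 1/2 := by
        rw [div_le_iff₀ hMpos]
        have := hvM i
        linarith
      rw [hw]; dsimp only; linarith
  · intro p hp
    have hup : u < f p := hfp _ hp
    have hpnn' : 0 ≤ ∑ i, p i := Finset.sum_nonneg fun i _ => hpnn p hp i
    rw [hsum b₀, hsum p]
    have hdiv' : u / M < f p / M := by gcongr
    have hε : min (η/2) (δ/2) ≤ δ/2 := min_le_right _ _
    have h1 : f b₀ / M + δ = u / M := by
      rw [hδ]; field_simp; ring
    have h2 : η * ∑ i, b₀ i = η * Sb := rfl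
    have h3 : 0 ≤ η * ∑ i, p i := mul_nonneg hηpos.le hpnn'
    linarith

/-- Lemma `L:A to v0`.  If `𝒜 ⊆ ℤ_{≥0}^k` is finite and
`b₀ ∉ 𝒫(𝒜)`, there exist `ε > 0` and `v₀ ∈ (ε,1]^k` with
`v₀·b₀ + ε < v₀·p` for every `p ∈ 𝒫(𝒜)`. -/
theorem statement9
    (k : ℕ) (hk : 1 ≤ k) (b₀ : Fin k → ℝ) (hb₀ : ∀ i, 0 ≤ b₀ i)
    (A : Finset (Fin k → ℕ)) (hA : b₀ ∉ orthantHull (↑A : Set (Fin k → ℕ))) :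
    ∃ ε : ℝ, 0 < ε ∧ ∃ v₀ : Fin k → ℝ, (∀ i, ε < v₀ i ∧ v₀ i ≤ 1) ∧
      ∀ p ∈ orthantHull (↑A : Set (Fin k → ℕ)),
        (∑ i, v₀ i * b₀ i) + ε < ∑ i, v₀ i * p i := by
  exact statement9_aux k hk b₀ hb₀ A hA
end

section
/- Fix b_0 ∈ [0,∞)^k. For every v_0 ∈ (0,1]^k there exists a finite set A ⊆ ℤ_{≥0}^k such that b_0 ∉ P(A) and {b ∈ ℤ_{≥0}^k : v_0 · b_0 < v_0 · b} ⊆ P(A). -/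
open MeasureTheory Metric Set
open scoped ENNReal NNReal

/-- Lemma `L:v0 to A`.  For every `v₀ ∈ (0,1]^k` there is a
finite set `𝒜 ⊆ ℤ_{≥0}^k` with `b₀ ∉ 𝒫(𝒜)` and
`{b ∈ ℤ_{≥0}^k : v₀·b₀ < v₀·b} ⊆ 𝒫(𝒜)`. -/
theorem statement10
    (k : ℕ) (hk : 1 ≤ k) (b₀ : Fin k → ℝ) (hb₀ : ∀ i, 0 ≤ b₀ i)
    (v₀ : Fin k → ℝ) (hv₀ : ∀ i, 0 < v₀ i ∧ v₀ i ≤ 1) :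
    ∃ A : Finset (Fin k → ℕ),
      b₀ ∉ orthantHull (↑A : Set (Fin k → ℕ)) ∧
      ∀ b : Fin k → ℕ, (∑ i, v₀ i * b₀ i) < ∑ i, v₀ i * (b i : ℝ) →
        (fun i => (b i : ℝ)) ∈ orthantHull (↑A : Set (Fin k → ℕ)) := by
  classical
  set c : ℝ := ∑ i, v₀ i * b₀ i with hc
  have hc0 : 0 ≤ c := Finset.sum_nonneg fun i _ => mul_nonneg (hv₀ i).1.le (hb₀ i)
  have hne : (Finset.univ : Finset (Fin k)).Nonempty := ⟨⟨0, hk⟩, Finset.mem_univ _⟩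
  set m : ℝ := Finset.univ.inf' hne v₀ with hm
  have hm0 : 0 < m := by
    rw [hm, Finset.lt_inf'_iff]
    exact fun i _ => (hv₀ i).1
  obtain ⟨N, hN⟩ : ∃ N : ℕ, c + 1 ≤ m * N := by
    obtain ⟨N, hN⟩ := exists_nat_ge ((c + 1) / m)
    exact ⟨N, by rwa [div_le_iff₀ hm0, mul_comm] at hN⟩
  have hNi : ∀ i, c + 1 ≤ v₀ i * N :=
    fun i => hN.trans (mul_le_mul_of_nonneg_right
      (Finset.inf'_le _ (Finset.mem_univ i)) (Nat.cast_nonneg N))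
  set A : Finset (Fin k → ℕ) :=
    Finset.image (fun f : Fin k → Fin (N + 1) => fun i => (f i : ℕ))
      (Finset.univ.filter fun f => c < ∑ i, v₀ i * ((f i : ℕ) : ℝ)) with hA
  have hmemA : ∀ a : Fin k → ℕ, a ∈ A → c < ∑ i, v₀ i * (a i : ℝ) := by
    intro a ha
    rw [hA, Finset.mem_image] at ha
    obtain ⟨f, hf, rfl⟩ := ha
    exact (Finset.mem_filter.1 hf).2
  have hmemA' : ∀ a : Fin k → ℕ, (∀ i, a i ≤ N) → c < ∑ i, v₀ i * (a i : ℝ) → a ∈ A := by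
    intro a haN hac
    rw [hA, Finset.mem_image]
    refine ⟨fun i => ⟨a i, Nat.lt_succ_of_le (haN i)⟩, Finset.mem_filter.2 ⟨Finset.mem_univ _, ?_⟩, rfl⟩
    simpa using hac
  refine ⟨A, ?_, ?_⟩
  · intro hmem
    have hconv : Convex ℝ {p : Fin k → ℝ | c < ∑ i, v₀ i * p i} := by
      refine convex_halfSpace_gt ⟨fun x y => ?_, fun r x => ?_⟩ c
      · simp [mul_add, Finset.sum_add_distrib]
      · simp [Finset.mul_sum, mul_left_comm]
    have hsub : orthantHull (↑A : Set (Fin k → ℕ)) ⊆ {p : Fin k → ℝ | c < ∑ i, v₀ i * p i} := by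
      refine convexHull_min ?_ hconv
      rintro p ⟨a, ha, hle⟩
      have h1 : c < ∑ i, v₀ i * (a i : ℝ) := hmemA a ha
      have h2 : ∑ i, v₀ i * (a i : ℝ) ≤ ∑ i, v₀ i * p i :=
        Finset.sum_le_sum fun i _ => mul_le_mul_of_nonneg_left (hle i) (hv₀ i).1.le
      exact h1.trans_le h2
    exact lt_irrefl c (hsub hmem)
  · have key : ∀ n (b : Fin k → ℕ), (∑ i, b i) = n → c < ∑ i, v₀ i * (b i : ℝ) →
        ∃ a : Fin k → ℕ, (∀ i, a i ≤ b i) ∧ (∀ i, a i ≤ N) ∧ c < ∑ i, v₀ i * (a i : ℝ) := by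
      intro n
      induction n using Nat.strong_induction_on with
      | _ n ih =>
        intro b hsum hb
        by_cases hball : ∀ i, b i ≤ N
        · exact ⟨b, fun i => le_rfl, hball, hb⟩
        · push_neg at hball
          obtain ⟨i, hi⟩ := hball
          have hbi1 : 1 ≤ b i := Nat.one_le_iff_ne_zero.2 (by omega)
          set b' : Fin k → ℕ := Function.update b i (b i - 1) with hb'
          have hb'le : ∀ j, b' j ≤ b j := by
            intro j
            rcases eq_or_ne j i with rfl | hji
            · simp [hb']
            · simp [hb', Function.update_of_ne hji]
          have hb'lt : ∑ j, b' j < n := by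
            rw [← hsum]
            refine Finset.sum_lt_sum (fun j _ => hb'le j) ⟨i, Finset.mem_univ i, ?_⟩
            simp [hb']; omega
          have hsumb' : ∑ j, v₀ j * (b' j : ℝ) = (∑ j, v₀ j * (b j : ℝ)) - v₀ i := by
            have : ∀ j, v₀ j * (b' j : ℝ)
                = v₀ j * (b j : ℝ) - (if j = i then v₀ i else 0) := by
              intro j
              rcases eq_or_ne j i with rfl | hji
              · have : ((b j - 1 : ℕ) : ℝ) = (b j : ℝ) - 1 := by
                  push_cast [Nat.cast_sub hbi1]; ring
                simp [hb', this, mul_sub]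
              · simp [hb', Function.update_of_ne hji, hji]
            rw [Finset.sum_congr rfl fun j _ => this j, Finset.sum_sub_distrib]
            simp
          have hterm : v₀ i * (b i : ℝ) ≤ ∑ j, v₀ j * (b j : ℝ) :=
            Finset.single_le_sum (fun j _ => mul_nonneg (hv₀ j).1.le (Nat.cast_nonneg _))
              (Finset.mem_univ i)
          have hbig : c + v₀ i < ∑ j, v₀ j * (b j : ℝ) := by
            have h1 : (N : ℝ) + 1 ≤ (b i : ℝ) := by
              have : N + 1 ≤ b i := hi
              exact_mod_cast this
            have h2 : v₀ i * ((N : ℝ) + 1) ≤ v₀ i * (b i : ℝ) :=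
              mul_le_mul_of_nonneg_left h1 (hv₀ i).1.le
            have h3 : c + 1 + v₀ i ≤ v₀ i * ((N : ℝ) + 1) := by
              have := hNi i; nlinarith
            nlinarith
          have hb'c : c < ∑ j, v₀ j * (b' j : ℝ) := by
            rw [hsumb']; linarith
          obtain ⟨a, ha1, ha2, ha3⟩ := ih _ hb'lt b' rfl hb'c
          exact ⟨a, fun j => (ha1 j).trans (hb'le j), ha2, ha3⟩
    intro b hb
    obtain ⟨a, ha1, ha2, ha3⟩ := key (∑ i, b i) b rfl hb
    refine subset_convexHull ℝ _ ?_
    exact ⟨a, hmemA' a ha2 ha3, fun i => by simpa using (Nat.cast_le (α := ℝ)).2 (ha1 i)⟩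
end

section
/- Fix b_0 ∈ [0,∞)^k. There exists a finite set S, depending only on b_0 and k, of pairs (ε, v_0) with ε > 0 and v_0 ∈ (ε,1]^k, such that for every finite set B ⊆ ℤ_{≥0}^k with #B ≤ k+1 and b_0 ∉ P(B), some pair (ε, v_0) ∈ S satisfies b · v_0 > b_0 · v_0 + ε for every b ∈ P(B). -/
open MeasureTheory Metric Set
open scoped ENNReal NNReal

section StAux

open Finset Set
open scoped Pointwise

/-- Strong-induction step: every element of `U ⊆ (ι → ℕ)` lies above a minimal element of `U`. -/
lemma st11_exists_min_le {ι : Type*} [Fintype ι] (U : Set (ι → ℕ)) :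
    ∀ (n : ℕ) (u : ι → ℕ), (∑ x, u x) = n → u ∈ U →
      ∃ d ∈ U, (∀ x, d x ≤ u x) ∧ ∀ v ∈ U, (∀ x, v x ≤ d x) → v = d := by
  intro n
  induction n using Nat.strong_induction_on with
  | _ n ih =>
    intro u hn hu
    by_cases h : ∀ v ∈ U, (∀ x, v x ≤ u x) → v = u
    · exact ⟨u, hu, fun x => le_rfl, h⟩
    · push_neg at h
      obtain ⟨v, hv, hvu, hne⟩ := h
      have hex : ∃ i ∈ Finset.univ, v i < u i := by
        by_contra hc
        push_neg at hc
        exact hne (funext fun x => le_antisymm (hvu x) (hc x (Finset.mem_univ x)))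
      have hlt : (∑ x, v x) < n := by
        rw [← hn]
        exact Finset.sum_lt_sum (fun i _ => hvu i) hex
      obtain ⟨d, hd, hdv, hmin⟩ := ih _ hlt v rfl hv
      exact ⟨d, hd, fun x => (hdv x).trans (hvu x), hmin⟩

/-- **Dickson finite basis**: every subset of `ι → ℕ` has a finite subset below it. -/
lemma st11_exists_finite_basis {ι : Type*} [Fintype ι] (U : Set (ι → ℕ)) :
    ∃ D : Finset (ι → ℕ), (↑D : Set (ι → ℕ)) ⊆ U ∧
      ∀ u ∈ U, ∃ d ∈ D, ∀ x, d x ≤ u x := by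
  classical
  set M : Set (ι → ℕ) := {d | d ∈ U ∧ ∀ v ∈ U, (∀ x, v x ≤ d x) → v = d} with hM
  have hanti : IsAntichain (· ≤ ·) M := by
    intro a ha b hb hab hle
    exact hab (hb.2 a ha.1 fun x => hle x)
  letI : ∀ i : ι, IsWellOrder ((fun _ : ι => ℕ) i) (· < ·) :=
    fun _ => inferInstanceAs (IsWellOrder ℕ (· < ·))
  have hfin : M.Finite :=
    hanti.finite_of_partiallyWellOrderedOn
      (((Set.isPWO_univ_iff (α := ι → ℕ)).2 inferInstance).mono (Set.subset_univ M))
  refine ⟨hfin.toFinset, ?_, ?_⟩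
  · intro d hd
    exact (hfin.mem_toFinset.1 hd).1
  · intro u hu
    obtain ⟨d, hd, hdu, hmin⟩ := st11_exists_min_le U _ u rfl hu
    exact ⟨d, hfin.mem_toFinset.2 ⟨hd, hmin⟩, hdu⟩

/-- A continuous linear functional on `Fin k → ℝ` is given by its coefficients. -/
lemma st11_clm_apply {k : ℕ} (f : (Fin k → ℝ) →L[ℝ] ℝ) (y : Fin k → ℝ) :
    f y = ∑ i, y i * f (Pi.single i 1) := by
  have hy : y = ∑ i, y i • (Pi.single i (1 : ℝ) : Fin k → ℝ) := by
    funext x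
    simp [Finset.sum_apply, Pi.single_apply]
  conv_lhs => rw [hy]
  rw [map_sum]
  simp [smul_eq_mul]

lemma st11_orthantHull_nonneg {k : ℕ} (B : Set (Fin k → ℕ)) :
    orthantHull B ⊆ {p : Fin k → ℝ | ∀ i, 0 ≤ p i} := by
  apply convexHull_min
  · rintro p ⟨b, _, hb⟩ i
    exact le_trans (by positivity) (hb i)
  · intro x hx y hy a b ha hb hab
    intro i
    have h1 := hx i
    have h2 := hy i
    have : (a • x + b • y) i = a * x i + b * y i := by
      simp [smul_eq_mul]
    rw [this]
    have := add_nonneg (mul_nonneg ha h1) (mul_nonneg hb h2)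
    linarith

lemma st11_orthantHull_anti {k : ℕ} {A B : Set (Fin k → ℕ)}
    (h : ∀ b ∈ B, ∃ a ∈ A, ∀ i, a i ≤ b i) : orthantHull B ⊆ orthantHull A := by
  apply convexHull_mono
  rintro p ⟨b, hb, hbp⟩
  obtain ⟨a, ha, hab⟩ := h b hb
  exact ⟨a, ha, fun i => le_trans (by exact_mod_cast hab i) (hbp i)⟩

lemma st11_mem_orthantHull_of {k : ℕ} {B : Set (Fin k → ℕ)} {c b₀ : Fin k → ℝ}
    (hc : c ∈ convexHull ℝ ((fun b : Fin k → ℕ => fun i => (b i : ℝ)) '' B))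
    (hcb : ∀ i, c i ≤ b₀ i) : b₀ ∈ orthantHull B := by
  have hmem : c + (b₀ - c) ∈ convexHull ℝ ((fun b : Fin k → ℕ => fun i => (b i : ℝ)) '' B)
      + convexHull ℝ ({b₀ - c} : Set (Fin k → ℝ)) := by
    apply Set.add_mem_add hc
    rw [convexHull_singleton]
    exact Set.mem_singleton _
  rw [← convexHull_add] at hmem
  have h2 : c + (b₀ - c) = b₀ := by abel
  rw [h2] at hmem
  refine convexHull_mono ?_ hmem
  intro p hp
  rw [Set.mem_add] at hp
  obtain ⟨x, ⟨b, hb, rfl⟩, y, hy, rfl⟩ := hp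
  rw [Set.mem_singleton_iff] at hy
  subst hy
  refine ⟨b, hb, fun i => ?_⟩
  have := hcb i
  simp only [Pi.add_apply, Pi.sub_apply]
  linarith

/-- Separation of `b₀` from `orthantHull B` by a strictly positive normalized functional. -/
lemma st11_sep {k : ℕ} (hk : 1 ≤ k) (b₀ : Fin k → ℝ) (hb₀ : ∀ i, 0 ≤ b₀ i)
    (B : Set (Fin k → ℕ)) (hBfin : B.Finite) (hB : b₀ ∉ orthantHull B) :
    ∃ t : ℝ × (Fin k → ℝ), (0 < t.1 ∧ ∀ i, t.1 < t.2 i ∧ t.2 i ≤ 1) ∧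
      ∀ p ∈ orthantHull B, (∑ i, b₀ i * t.2 i) + t.1 < ∑ i, p i * t.2 i := by
  classical
  set C : Set (Fin k → ℝ) :=
    convexHull ℝ ((fun b : Fin k → ℕ => fun i => (b i : ℝ)) '' B) with hC
  set K : Set (Fin k → ℝ) := {y | ∀ i, y i ≤ b₀ i} with hK
  have hKrw : K = ⋂ i, {y : Fin k → ℝ | y i ≤ b₀ i} := by
    ext y; simp [hK]
  have hCcomp : IsCompact C := (hBfin.image _).isCompact_convexHull ℝ
  have hKclosed : IsClosed K := by
    rw [hKrw]
    exact isClosed_iInter fun i => isClosed_le (continuous_apply i) continuous_const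
  have hKconv : Convex ℝ K := by
    rw [hKrw]
    exact convex_iInter fun i =>
      convex_halfSpace_le ⟨fun a b => rfl, fun c a => rfl⟩ _
  have hdisj : Disjoint C K := by
    rw [Set.disjoint_left]
    intro c hcC hcK
    exact hB (st11_mem_orthantHull_of hcC hcK)
  obtain ⟨f, u, v, hfC, huv, hfK⟩ :=
    geometric_hahn_banach_compact_closed (convex_convexHull ℝ _) hCcomp hKconv hKclosed hdisj
  set w : Fin k → ℝ := fun i => -(f (Pi.single i 1)) with hw
  have key : ∀ y : Fin k → ℝ, (∑ i, y i * w i) = -(f y) := by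
    intro y
    rw [st11_clm_apply f y, ← Finset.sum_neg_distrib]
    exact Finset.sum_congr rfl fun i _ => by simp [hw, mul_neg]
  have hb₀K : b₀ ∈ K := fun i => le_rfl
  have hvb : v < f b₀ := hfK b₀ hb₀K
  -- nonnegativity of w
  have hw0 : ∀ i, 0 ≤ w i := by
    intro i
    by_contra hneg
    push_neg at hneg
    have hfs : 0 < f (Pi.single i 1) := by
      have := hneg
      rw [hw] at this
      simpa using this
    set t : ℝ := (f b₀ - v) / f (Pi.single i 1) + 1 with ht
    have ht1 : 0 ≤ (f b₀ - v) / f (Pi.single i 1) := div_nonneg (by linarith) hfs.le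
    have ht0 : 0 < t := by rw [ht]; linarith
    have hyK : (b₀ - t • (Pi.single i (1 : ℝ) : Fin k → ℝ)) ∈ K := by
      intro j
      have hsingle : (0:ℝ) ≤ (Pi.single i (1:ℝ) : Fin k → ℝ) j := by
        rcases eq_or_ne j i with rfl | hji
        · simp
        · simp [Pi.single_eq_of_ne hji]
      have : 0 ≤ t * (Pi.single i (1:ℝ) : Fin k → ℝ) j := mul_nonneg ht0.le hsingle
      simp only [Pi.sub_apply, Pi.smul_apply, smul_eq_mul]
      linarith
    have hKy := hfK _ hyK
    rw [map_sub, f.map_smul, smul_eq_mul] at hKy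
    have htfs : f b₀ - v < t * f (Pi.single i 1) := by
      rw [ht, add_mul, div_mul_cancel₀ _ (ne_of_gt hfs)]
      linarith
    linarith
  set g : ℝ := v - u with hg
  have hg0 : 0 < g := by rw [hg]; linarith
  have hb₀w : (∑ i, b₀ i * w i) < -v := by
    rw [key]; linarith
  -- half-space containment of the hull
  have hL : IsLinearMap ℝ (fun p : Fin k → ℝ => ∑ i, p i * w i) := by
    constructor
    · intro p q
      simp [Pi.add_apply, add_mul, Finset.sum_add_distrib]
    · intro c p
      simp only [Pi.smul_apply, smul_eq_mul, Finset.mul_sum]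
      exact Finset.sum_congr rfl fun i _ => by ring
  have hhalf : orthantHull B ⊆
      {p : Fin k → ℝ | (∑ i, b₀ i * w i) + g ≤ ∑ i, p i * w i} := by
    apply convexHull_min
    · rintro p ⟨b, hb, hbp⟩
      have hbC : (fun i => (b i : ℝ)) ∈ C := by
        apply subset_convexHull
        exact ⟨b, hb, rfl⟩
      have hfb : f (fun i => (b i : ℝ)) < u := hfC _ hbC
      have h1 : (∑ i, (b i : ℝ) * w i) ≤ ∑ i, p i * w i :=
        Finset.sum_le_sum fun i _ => mul_le_mul_of_nonneg_right (hbp i) (hw0 i)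
      have h2 : -u ≤ ∑ i, (b i : ℝ) * w i := by
        rw [key]; linarith
      have : (∑ i, b₀ i * w i) + g ≤ -u := by rw [hg]; linarith
      simp only [Set.mem_setOf_eq]
      linarith
    · exact convex_halfSpace_ge hL _
  -- positivity fix-up
  set S₀ : ℝ := ∑ i, b₀ i with hS₀
  have hS₀0 : 0 ≤ S₀ := Finset.sum_nonneg fun i _ => hb₀ i
  set δ : ℝ := g / (2 * (S₀ + 1)) with hδ
  have hδ0 : 0 < δ := by
    rw [hδ]
    positivity
  set w' : Fin k → ℝ := fun i => w i + δ with hw'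
  have hw'pos : ∀ i, 0 < w' i := fun i => by
    have := hw0 i
    simp only [hw']
    linarith
  have hδS₀ : δ * S₀ ≤ g / 2 := by
    rw [hδ, div_mul_eq_mul_div, div_le_div_iff₀ (by positivity) (by norm_num)]
    nlinarith
  have hmain : ∀ p ∈ orthantHull B,
      (∑ i, b₀ i * w' i) + g / 2 ≤ ∑ i, p i * w' i := by
    intro p hp
    have hpw := hhalf hp
    simp only [Set.mem_setOf_eq] at hpw
    have hppos : ∀ i, 0 ≤ p i := st11_orthantHull_nonneg B hp
    have e1 : (∑ i, p i * w' i) = (∑ i, p i * w i) + δ * ∑ i, p i := by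
      simp only [hw', mul_add, Finset.sum_add_distrib, Finset.mul_sum]
      congr 1
      exact Finset.sum_congr rfl fun i _ => by ring
    have e2 : (∑ i, b₀ i * w' i) = (∑ i, b₀ i * w i) + δ * S₀ := by
      simp only [hw', mul_add, Finset.sum_add_distrib, Finset.mul_sum, hS₀]
      congr 1
      exact Finset.sum_congr rfl fun i _ => by ring
    have hpsum : 0 ≤ δ * ∑ i, p i :=
      mul_nonneg hδ0.le (Finset.sum_nonneg fun i _ => hppos i)
    rw [e1, e2]
    linarith
  set M : ℝ := 1 + ∑ i, w' i with hM
  have hMw : ∀ i, w' i < M := by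
    intro i
    have h1 : w' i ≤ ∑ j, w' j :=
      Finset.single_le_sum (fun j _ => (hw'pos j).le) (Finset.mem_univ i)
    rw [hM]; linarith
  have hM1 : 1 ≤ M := by
    have : 0 ≤ ∑ i, w' i := Finset.sum_nonneg fun i _ => (hw'pos i).le
    rw [hM]; linarith
  have hM0 : 0 < M := by linarith
  set v₀ : Fin k → ℝ := fun i => w' i / M with hv₀
  set ε : ℝ := min (g / (2 * M)) (δ / M) / 2 with hε
  have hε0 : 0 < ε := by
    rw [hε]
    have h1 : 0 < g / (2 * M) := by positivity
    have h2 : 0 < δ / M := by positivity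
    have h3 := lt_min h1 h2
    linarith
  refine ⟨(ε, v₀), ⟨hε0, fun i => ⟨?_, ?_⟩⟩, ?_⟩
  · -- ε < v₀ i
    have h2 : ε ≤ (δ / M) / 2 := by
      rw [hε]
      have := min_le_right (g / (2 * M)) (δ / M)
      linarith
    have h3 : δ / M ≤ w' i / M := by
      refine (div_le_div_iff_of_pos_right hM0).2 ?_
      have := hw0 i
      simp only [hw']
      linarith
    have h4 : 0 < δ / M := by positivity
    simp only [hv₀]
    linarith
  · -- v₀ i ≤ 1
    simp only [hv₀]
    rw [div_le_one hM0]
    exact (hMw i).le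
  · -- separation
    intro p hp
    have h := hmain p hp
    have e1 : (∑ i, p i * v₀ i) = (∑ i, p i * w' i) / M := by
      rw [Finset.sum_div]
      exact Finset.sum_congr rfl fun i _ => by rw [hv₀]; ring
    have e2 : (∑ i, b₀ i * v₀ i) = (∑ i, b₀ i * w' i) / M := by
      rw [Finset.sum_div]
      exact Finset.sum_congr rfl fun i _ => by rw [hv₀]; ring
    have hdiv : (∑ i, b₀ i * w' i) / M + (g / 2) / M ≤ (∑ i, p i * w' i) / M := by
      rw [← add_div]
      exact (div_le_div_iff_of_pos_right hM0).2 h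
    have hεlt : ε < (g / 2) / M := by
      have heq : g / (2 * M) = (g / 2) / M := (div_div g 2 M).symm
      have h1 := min_le_left (g / (2 * M)) (δ / M)
      have h2 : 0 < g / (2 * M) := by positivity
      rw [hε, ← heq]
      linarith
    rw [e1, e2]
    linarith

lemma st11_exists_range_eq {α : Type*} (s : Finset α) (n : ℕ) (hpos : s.Nonempty)
    (hcard : s.card ≤ n) : ∃ T : Fin n → α, Set.range T = (↑s : Set α) := by
  have hc : 0 < s.card := Finset.card_pos.2 hpos
  let e := s.equivFin
  refine ⟨fun j => (e.symm ⟨(j : ℕ) % s.card, Nat.mod_lt _ hc⟩ : α), ?_⟩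
  ext x
  constructor
  · rintro ⟨j, rfl⟩
    exact (e.symm _).2
  · intro hx
    refine ⟨⟨(e ⟨x, hx⟩ : ℕ), lt_of_lt_of_le (e ⟨x, hx⟩).isLt hcard⟩, ?_⟩
    have hlt : ((e ⟨x, hx⟩ : Fin s.card) : ℕ) < s.card := (e ⟨x, hx⟩).isLt
    have heq : (⟨((e ⟨x, hx⟩ : Fin s.card) : ℕ) % s.card, Nat.mod_lt _ hc⟩ : Fin s.card)
        = e ⟨x, hx⟩ := by
      ext
      simp [Nat.mod_eq_of_lt hlt]
    simp only [heq, Equiv.symm_apply_apply]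

end StAux

/-- Lemma `L:simplex extreme`.  There is a finite (admissible)
set of pairs `(ε, v₀)` such that every finite `B ⊆ ℤ_{≥0}^k` with `#B ≤ k+1`
and `b₀ ∉ 𝒫(B)` is separated from `b₀` by some pair from the collection. -/
theorem statement11
    (k : ℕ) (hk : 1 ≤ k) (b₀ : Fin k → ℝ) (hb₀ : ∀ i, 0 ≤ b₀ i) :
    ∃ S : Finset (ℝ × (Fin k → ℝ)),
      (∀ t ∈ S, 0 < t.1 ∧ ∀ i, t.1 < t.2 i ∧ t.2 i ≤ 1) ∧
      ∀ B : Finset (Fin k → ℕ), B.card ≤ k + 1 →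
        b₀ ∉ orthantHull (↑B : Set (Fin k → ℕ)) →
        ∃ t ∈ S, ∀ b ∈ orthantHull (↑B : Set (Fin k → ℕ)),
          (∑ i, b₀ i * t.2 i) + t.1 < ∑ i, b i * t.2 i := by
  classical
  set Bad : Set ((Fin (k + 1) × Fin k) → ℕ) :=
    {u | b₀ ∉ orthantHull (Set.range fun j : Fin (k + 1) => fun i => u (j, i))} with hBad
  obtain ⟨D, hDsub, hDbasis⟩ := st11_exists_finite_basis Bad
  have hpair : ∀ u, u ∈ Bad → ∃ t : ℝ × (Fin k → ℝ),
      (0 < t.1 ∧ ∀ i, t.1 < t.2 i ∧ t.2 i ≤ 1) ∧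
      ∀ p ∈ orthantHull (Set.range fun j : Fin (k + 1) => fun i => u (j, i)),
        (∑ i, b₀ i * t.2 i) + t.1 < ∑ i, p i * t.2 i := by
    intro u hu
    exact st11_sep hk b₀ hb₀ _ (Set.finite_range _) hu
  choose! F hF1 hF2 using hpair
  refine ⟨insert ((1 : ℝ) / 2, fun _ => (1 : ℝ)) (D.image F), ?_, ?_⟩
  · intro t ht
    rcases Finset.mem_insert.1 ht with h | h
    · subst h
      exact ⟨by norm_num, fun i => ⟨by norm_num, le_rfl⟩⟩
    · obtain ⟨d, hd, rfl⟩ := Finset.mem_image.1 h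
      exact hF1 d (hDsub hd)
  · intro B hcard hBmem
    rcases B.eq_empty_or_nonempty with rfl | hne
    · refine ⟨((1 : ℝ) / 2, fun _ => 1), Finset.mem_insert_self _ _, ?_⟩
      intro b hb
      exfalso
      have : orthantHull (↑(∅ : Finset (Fin k → ℕ)) : Set (Fin k → ℕ)) = ∅ := by
        have : {p : Fin k → ℝ | ∃ b ∈ (↑(∅ : Finset (Fin k → ℕ)) : Set (Fin k → ℕ)),
            ∀ i, (b i : ℝ) ≤ p i} = ∅ := by
          ext p; simp
        rw [orthantHull, this, convexHull_empty]
      rw [this] at hb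
      exact hb
    · obtain ⟨T, hT⟩ := st11_exists_range_eq B (k + 1) hne hcard
      have huBad : (fun p : Fin (k + 1) × Fin k => T p.1 p.2) ∈ Bad := by
        show b₀ ∉ orthantHull (Set.range fun j : Fin (k + 1) => fun i => T j i)
        have hrw : (Set.range fun j : Fin (k + 1) => fun i => T j i)
            = (↑B : Set (Fin k → ℕ)) := by
          rw [← hT]
        rw [hrw]
        exact hBmem
      obtain ⟨d, hdD, hdu⟩ := hDbasis _ huBad
      have hdBad : d ∈ Bad := hDsub hdD
      refine ⟨F d, Finset.mem_insert_of_mem (Finset.mem_image_of_mem F hdD), ?_⟩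
      intro b hb
      apply hF2 d hdBad
      have hsub : orthantHull (↑B : Set (Fin k → ℕ)) ⊆
          orthantHull (Set.range fun j : Fin (k + 1) => fun i => d (j, i)) := by
        apply st11_orthantHull_anti
        intro bb hbb
        rw [← hT] at hbb
        obtain ⟨j, rfl⟩ := hbb
        exact ⟨fun i => d (j, i), ⟨j, rfl⟩, fun i => hdu (j, i)⟩
      exact hsub hb
end

section
/- Fix b_0 ∈ [0,∞)^k. There exists ε > 0, depending only on b_0 and k, such that for every finite set B = {b_1,…,b_m} ⊆ ℤ_{≥0}^k with m ≤ k+1 and b_0 ∉ P(B), and every convex combination b(θ) := Σ_{l=1}^m θ_l b_l (with θ_l ≥ 0 and Σ_{l=1}^m θ_l = 1), there exists an index i ∈ {1,…,k} such that the i-th coordinate satisfies b(θ)^i ≥ b_0^i + ε. -/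
open MeasureTheory Metric Set
open scoped ENNReal NNReal

section Aux
open Filter Topology

lemma mem_orthantHull_of_feas {k : ℕ} (b₀ : Fin k → ℝ) (B : Finset (Fin k → ℕ))
    (θ : (Fin k → ℕ) → ℝ) (h0 : ∀ b, 0 ≤ θ b) (h1 : ∑ b ∈ B, θ b = 1)
    (hle : ∀ i, ∑ b ∈ B, θ b * (b i : ℝ) ≤ b₀ i) :
    b₀ ∈ orthantHull (↑B : Set (Fin k → ℕ)) := by
  set v : Fin k → ℝ := fun i => b₀ i - ∑ b ∈ B, θ b * (b i : ℝ) with hv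
  have hv0 : ∀ i, 0 ≤ v i := fun i => by simp [hv, sub_nonneg.mpr (hle i)]
  set z : (Fin k → ℕ) → (Fin k → ℝ) := fun b => fun i => (b i : ℝ) + v i with hz
  have hmem : B.centerMass θ z ∈ orthantHull (↑B : Set (Fin k → ℕ)) := by
    apply Finset.centerMass_mem_convexHull B (fun b _ => h0 b) (by rw [h1]; norm_num)
    intro b hb
    exact ⟨b, hb, fun i => by simp [hz, hv0 i]⟩
  have : B.centerMass θ z = b₀ := by
    rw [Finset.centerMass, h1, inv_one, one_smul]
    funext i
    rw [Finset.sum_apply]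
    have : ∀ b ∈ B, (θ b • z b) i = θ b * (b i : ℝ) + θ b * v i := by
      intro b _; simp [hz]; ring
    rw [Finset.sum_congr rfl this, Finset.sum_add_distrib, ← Finset.sum_mul, h1]
    simp [hv]
  rwa [this] at hmem

lemma nat_eq_of_abs_lt {a b : ℕ} (h : |(a:ℝ) - b| < 1) : a = b := by
  have := abs_sub_lt_iff.mp h
  rcases lt_trichotomy a b with hl | he | hg
  · exfalso
    have : (a:ℝ) + 1 ≤ b := by exact_mod_cast Nat.succ_le_of_lt hl
    linarith
  · exact he
  · exfalso
    have : (b:ℝ) + 1 ≤ a := by exact_mod_cast Nat.succ_le_of_lt hg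
    linarith

lemma nat_ratio_dichotomy (x : ℕ → ℕ) (γ : ℝ)
    (h : Tendsto (fun m => (x m : ℝ) / (x m + 1)) atTop (𝓝 γ)) :
    (∃ v : ℕ, ∀ᶠ m in atTop, x m = v) ∨ Tendsto (fun m => (x m : ℝ)) atTop atTop := by
  rcases lt_or_ge γ 1 with hγ | hγ
  · left
    have hcont : Tendsto (fun r : ℝ => r / (1 - r)) (𝓝 γ) (𝓝 (γ / (1 - γ))) := by
      apply Tendsto.div tendsto_id (tendsto_const_nhds.sub tendsto_id)
      linarith
    have hx : Tendsto (fun m => (x m : ℝ)) atTop (𝓝 (γ / (1 - γ))) := by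
      have := hcont.comp h
      refine this.congr (fun m => ?_)
      have hpos : (0:ℝ) < (x m : ℝ) + 1 := by positivity
      show (x m : ℝ) / (x m + 1) / (1 - (x m : ℝ) / (x m + 1)) = x m
      have h1 : 1 - (x m : ℝ)/(x m + 1) = 1/((x m : ℝ)+1) := by field_simp; ring
      rw [h1]; field_simp
    set c := γ / (1 - γ)
    have hev : ∀ᶠ m in atTop, |(x m : ℝ) - c| < 1/2 := by
      have := hx.eventually (eventually_abs_sub_lt c (by norm_num : (0:ℝ) < 1/2))
      simpa using this
    obtain ⟨m₀, hm₀⟩ := hev.exists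
    refine ⟨x m₀, ?_⟩
    filter_upwards [hev] with m hm
    apply nat_eq_of_abs_lt
    have : |(x m : ℝ) - x m₀| ≤ |(x m : ℝ) - c| + |c - (x m₀ : ℝ)| := abs_sub_le _ _ _
    rw [abs_sub_comm c _] at this
    linarith
  · right
    rw [Filter.tendsto_atTop]
    intro C
    have hC' : (0:ℝ) ≤ max C 0 := le_max_right _ _
    have hlt : max C 0 / (max C 0 + 1) < γ :=
      lt_of_lt_of_le (by rw [div_lt_one (by positivity)]; linarith) hγ
    filter_upwards [h.eventually (eventually_gt_nhds hlt)] with m hm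
    have hpos : (0:ℝ) < (x m : ℝ) + 1 := by positivity
    have := (div_lt_div_iff₀ (by positivity) hpos).mp hm
    have hxm : max C 0 < (x m : ℝ) := by nlinarith
    exact le_of_lt (lt_of_le_of_lt (le_max_left _ _) hxm)

/-- Tuple-level feasibility. -/
def TFeas {k : ℕ} (b₀ : Fin k → ℝ) (ε : ℝ) (f : Fin (k+1) → Fin k → ℕ) : Prop :=
  ∃ w : Fin (k+1) → ℝ, (∀ l, 0 ≤ w l) ∧ ∑ l, w l = 1 ∧
    ∀ i, ∑ l, w l * (f l i : ℝ) ≤ b₀ i + ε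

lemma exists_eps (k : ℕ) (b₀ : Fin k → ℝ) :
    ∃ ε : ℝ, 0 < ε ∧ ∀ f : Fin (k+1) → Fin k → ℕ, TFeas b₀ ε f → TFeas b₀ 0 f := by
  classical
  by_contra hcon
  push_neg at hcon
  have h' : ∀ n : ℕ, ∃ f, TFeas b₀ (1/((n:ℝ)+1)) f ∧ ¬ TFeas b₀ 0 f := by
    intro n
    obtain ⟨f, hf1, hf2⟩ := hcon (1/((n:ℝ)+1)) (by positivity)
    exact ⟨f, hf1, hf2⟩
  choose F hF hnF using h'
  have hF' : ∀ n, ∃ w : Fin (k+1) → ℝ, (∀ l, 0 ≤ w l) ∧ ∑ l, w l = 1 ∧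
      ∀ i, ∑ l, w l * (F n l i : ℝ) ≤ b₀ i + 1/((n:ℝ)+1) := hF
  choose W hW0 hW1 hWle using hF'
  -- compactness
  set X := (Fin (k+1) → ℝ) × (Fin (k+1) → Fin k → ℝ) with hX
  set g : ℕ → X := fun n => (W n, fun l i => (F n l i : ℝ) / (F n l i + 1)) with hg
  have hball : ∀ n, g n ∈ Metric.closedBall (0 : X) 1 := by
    intro n
    rw [Metric.mem_closedBall, Prod.dist_eq, max_le_iff]
    constructor
    · rw [dist_pi_le_iff (by norm_num)]
      intro l
      simp only [hg, Prod.fst_zero, Pi.zero_apply, Real.dist_eq, sub_zero, abs_le]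
      constructor
      · linarith [hW0 n l]
      · calc W n l ≤ ∑ l', W n l' :=
              Finset.single_le_sum (fun l' _ => hW0 n l') (Finset.mem_univ l)
          _ = 1 := hW1 n
    · rw [dist_pi_le_iff (by norm_num)]
      intro l
      rw [dist_pi_le_iff (by norm_num)]
      intro i
      simp only [hg, Prod.snd_zero, Pi.zero_apply, Real.dist_eq, sub_zero, abs_le]
      have hpos : (0:ℝ) < (F n l i : ℝ) + 1 := by positivity
      have h0 : (0:ℝ) ≤ (F n l i : ℝ) / ((F n l i : ℝ) + 1) := by positivity
      constructor
      · linarith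
      · rw [div_le_one hpos]; linarith
  obtain ⟨p, -, φ, hφ, hconv⟩ :=
    tendsto_subseq_of_bounded Metric.isBounded_closedBall hball
  have hw : ∀ l, Tendsto (fun m => W (φ m) l) atTop (𝓝 (p.1 l)) := by
    intro l
    exact (tendsto_pi_nhds.mp ((continuous_fst.tendsto p).comp hconv)) l
  have hγ : ∀ l i, Tendsto (fun m => (F (φ m) l i : ℝ) / (F (φ m) l i + 1))
      atTop (𝓝 (p.2 l i)) := by
    intro l i
    exact (tendsto_pi_nhds.mp ((tendsto_pi_nhds.mp
      ((continuous_snd.tendsto p).comp hconv)) l)) i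
  have hdich : ∀ l i, (∃ v : ℕ, ∀ᶠ m in atTop, F (φ m) l i = v) ∨
      Tendsto (fun m => (F (φ m) l i : ℝ)) atTop atTop :=
    fun l i => nat_ratio_dichotomy _ _ (hγ l i)
  set L : Finset (Fin (k+1)) :=
    Finset.univ.filter (fun l => ∀ i, ∃ v : ℕ, ∀ᶠ m in atTop, F (φ m) l i = v) with hL
  have hβex : ∀ l i, ∃ v : ℕ, l ∈ L → ∀ᶠ m in atTop, F (φ m) l i = v := by
    intro l i
    by_cases hl : l ∈ L
    · obtain ⟨v, hv⟩ := (Finset.mem_filter.mp hl).2 i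
      exact ⟨v, fun _ => hv⟩
    · exact ⟨0, fun h => absurd h hl⟩
  choose β hβ using hβex
  -- limit weight vanishes off L
  have hwzero : ∀ l, l ∉ L → p.1 l = 0 := by
    intro l hl
    rw [hL, Finset.mem_filter] at hl
    push_neg at hl
    obtain ⟨i, hi⟩ := hl (Finset.mem_univ l)
    have htop : Tendsto (fun m => (F (φ m) l i : ℝ)) atTop atTop :=
      (hdich l i).resolve_left (not_exists.mpr (fun v hv => by
        obtain ⟨_, h1, h2⟩ := ((hi v).and_eventually hv).exists; exact h1 h2))
    have hb : ∀ᶠ m in atTop, W (φ m) l ≤ (b₀ i + 1) / (F (φ m) l i : ℝ) := by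
      filter_upwards [htop.eventually_ge_atTop 1] with m hm
      have hpos : (0:ℝ) < (F (φ m) l i : ℝ) := by linarith
      rw [le_div_iff₀ hpos]
      calc W (φ m) l * (F (φ m) l i : ℝ)
          ≤ ∑ l', W (φ m) l' * (F (φ m) l' i : ℝ) :=
            Finset.single_le_sum (f := fun l' => W (φ m) l' * (F (φ m) l' i : ℝ))
              (fun l' _ => mul_nonneg (hW0 _ l') (Nat.cast_nonneg _)) (Finset.mem_univ l)
        _ ≤ b₀ i + 1/((φ m : ℝ)+1) := hWle (φ m) i
        _ ≤ b₀ i + 1 := by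
            have : 1/((φ m : ℝ)+1) ≤ 1 := by
              rw [div_le_one (by positivity)]
              have : (0:ℝ) ≤ (φ m : ℝ) := Nat.cast_nonneg _
              linarith
            linarith
    have hzero : Tendsto (fun m => W (φ m) l) atTop (𝓝 0) :=
      tendsto_of_tendsto_of_tendsto_of_le_of_le' tendsto_const_nhds
        (Tendsto.div_atTop tendsto_const_nhds htop)
        (Eventually.of_forall (fun m => hW0 (φ m) l)) hb
    exact tendsto_nhds_unique (hw l) hzero
  have hw0 : ∀ l, 0 ≤ p.1 l := fun l =>
    ge_of_tendsto' (hw l) (fun m => hW0 (φ m) l)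
  have hsum : ∑ l, p.1 l = 1 := by
    have h1 : Tendsto (fun m => ∑ l, W (φ m) l) atTop (𝓝 (∑ l, p.1 l)) :=
      tendsto_finset_sum _ (fun l _ => hw l)
    exact tendsto_nhds_unique (h1.congr (fun m => hW1 (φ m))) tendsto_const_nhds
  have hkey : ∀ i, ∑ l ∈ L, p.1 l * (β l i : ℝ) ≤ b₀ i := by
    intro i
    have hevL : ∀ᶠ m in atTop, ∀ l ∈ L, F (φ m) l i = β l i :=
      (eventually_all_finset L).mpr (fun l hl => hβ l i hl)
    have hB : Tendsto (fun m => ∑ l ∈ L, W (φ m) l * (β l i : ℝ)) atTop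
        (𝓝 (∑ l ∈ L, p.1 l * (β l i : ℝ))) :=
      tendsto_finset_sum _ (fun l _ => (hw l).mul tendsto_const_nhds)
    have hA : Tendsto (fun m => ∑ l ∈ L, W (φ m) l * (F (φ m) l i : ℝ)) atTop
        (𝓝 (∑ l ∈ L, p.1 l * (β l i : ℝ))) := by
      apply hB.congr'
      filter_upwards [hevL] with m hm
      exact Finset.sum_congr rfl (fun l hl => by rw [hm l hl])
    have hC : Tendsto (fun m => b₀ i + 1/((φ m : ℝ) + 1)) atTop (𝓝 (b₀ i)) := by
      have h1 : Tendsto (fun m => ((φ m : ℝ) + 1)) atTop atTop :=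
        tendsto_atTop_add_const_right _ 1
          (tendsto_natCast_atTop_atTop.comp hφ.tendsto_atTop)
      have h2 : Tendsto (fun m => 1/((φ m : ℝ) + 1)) atTop (𝓝 0) := by
        exact tendsto_const_nhds.div_atTop h1
      simpa using tendsto_const_nhds.add h2
    refine le_of_tendsto_of_tendsto hA hC ?_
    filter_upwards with m
    calc ∑ l ∈ L, W (φ m) l * (F (φ m) l i : ℝ)
        ≤ ∑ l, W (φ m) l * (F (φ m) l i : ℝ) :=
          Finset.sum_le_sum_of_subset_of_nonneg (Finset.subset_univ L)
            (fun l _ _ => mul_nonneg (hW0 _ l) (Nat.cast_nonneg _))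
      _ ≤ b₀ i + 1/((φ m : ℝ)+1) := hWle (φ m) i
  -- conclude : contradiction with infeasibility at a large index
  have hevAll : ∀ᶠ m in atTop, ∀ l ∈ L, ∀ i, F (φ m) l i = β l i :=
    (eventually_all_finset L).mpr (fun l hl => eventually_all.mpr (fun i => hβ l i hl))
  obtain ⟨m₀, hm₀⟩ := hevAll.exists
  apply hnF (φ m₀)
  refine ⟨fun l => if l ∈ L then p.1 l else 0, fun l => ?_, ?_, ?_⟩
  · by_cases hl : l ∈ L <;> simp [hl, hw0 l]
  · rw [Finset.sum_ite_mem, Finset.univ_inter]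
    rw [Finset.sum_subset (Finset.subset_univ L) (fun l _ hl => hwzero l hl)]
    exact hsum
  · intro i
    rw [add_zero]
    calc ∑ l, (if l ∈ L then p.1 l else 0) * (F (φ m₀) l i : ℝ)
        = ∑ l, (if l ∈ L then p.1 l * (F (φ m₀) l i : ℝ) else 0) := by
          apply Finset.sum_congr rfl
          intro l _
          by_cases hl : l ∈ L <;> simp [hl]
      _ = ∑ l ∈ Finset.univ ∩ L, p.1 l * (F (φ m₀) l i : ℝ) := Finset.sum_ite_mem _ _ _
      _ = ∑ l ∈ L, p.1 l * (β l i : ℝ) := by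
          rw [Finset.univ_inter]
          exact Finset.sum_congr rfl (fun l hl => by rw [hm₀ l hl])
      _ ≤ b₀ i := hkey i


end Aux

open Filter Topology in
/-- Lemma `L:simplex separation`.  There is an admissible
`ε > 0` such that for every finite `B ⊆ ℤ_{≥0}^k` with `#B ≤ k+1` and
`b₀ ∉ 𝒫(B)`, every convex combination `b(θ)` of the elements of `B` satisfies
`b(θ)^i ≥ b₀^i + ε` for some coordinate `i`. -/
theorem statement12
    (k : ℕ) (hk : 1 ≤ k) (b₀ : Fin k → ℝ) (hb₀ : ∀ i, 0 ≤ b₀ i) :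
    ∃ ε : ℝ, 0 < ε ∧
      ∀ B : Finset (Fin k → ℕ), B.card ≤ k + 1 →
        b₀ ∉ orthantHull (↑B : Set (Fin k → ℕ)) →
        ∀ θ : (Fin k → ℕ) → ℝ, (∀ b, 0 ≤ θ b) → (∑ b ∈ B, θ b) = 1 →
          ∃ i : Fin k, b₀ i + ε ≤ ∑ b ∈ B, θ b * (b i : ℝ) := by
  classical
  obtain ⟨ε, hε, hA⟩ := exists_eps k b₀
  refine ⟨ε, hε, ?_⟩
  intro B hcard hnotin θ hθ0 hθ1
  by_contra hcon
  push_neg at hcon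
  have hBne : B.Nonempty := by
    rcases B.eq_empty_or_nonempty with h | h
    · rw [h] at hθ1; simp at hθ1
    · exact h
  obtain ⟨bs, hbs⟩ := hBne
  have hcard' : Fintype.card {x // x ∈ B} ≤ Fintype.card (Fin (k+1)) := by
    rw [Fintype.card_coe, Fintype.card_fin]; exact hcard
  obtain ⟨ι⟩ := Function.Embedding.nonempty_iff_card_le.mpr hcard'
  set f : Fin (k+1) → Fin k → ℕ :=
    fun j => if h : ∃ x : {x // x ∈ B}, ι x = j then (h.choose : Fin k → ℕ) else bs with hf
  set w : Fin (k+1) → ℝ :=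
    fun j => if h : ∃ x : {x // x ∈ B}, ι x = j then θ ↑h.choose else 0 with hw
  have hchoose : ∀ x : {x // x ∈ B},
      (⟨x, rfl⟩ : ∃ x' : {x // x ∈ B}, ι x' = ι x).choose = x := by
    intro x
    exact ι.injective (⟨x, rfl⟩ : ∃ x' : {x // x ∈ B}, ι x' = ι x).choose_spec
  have hfι : ∀ x : {x // x ∈ B}, f (ι x) = ↑x := by
    intro x
    rw [hf]
    have hex : ∃ x' : {x // x ∈ B}, ι x' = ι x := ⟨x, rfl⟩
    simp only [dif_pos hex]
    exact congrArg _ (ι.injective hex.choose_spec)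
  have hwι : ∀ x : {x // x ∈ B}, w (ι x) = θ ↑x := by
    intro x
    rw [hw]
    have hex : ∃ x' : {x // x ∈ B}, ι x' = ι x := ⟨x, rfl⟩
    simp only [dif_pos hex]
    exact congrArg _ (congrArg _ (ι.injective hex.choose_spec))
  have hmem : ∀ j, f j ∈ B := by
    intro j
    rw [hf]
    by_cases h : ∃ x : {x // x ∈ B}, ι x = j
    · simp only [dif_pos h]; exact h.choose.2
    · simp only [dif_neg h]; exact hbs
  have hwzero : ∀ j, j ∉ Finset.univ.map ι → w j = 0 := by
    intro j hj
    rw [hw]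
    apply dif_neg
    rintro ⟨x, rfl⟩
    exact hj (Finset.mem_map_of_mem ι (Finset.mem_univ x))
  have hwsum : ∑ j, w j = ∑ b ∈ B, θ b := by
    rw [← Finset.sum_subset (Finset.subset_univ (Finset.univ.map ι))
      (fun j _ hj => hwzero j hj), Finset.sum_map]
    rw [Finset.sum_congr rfl (fun x _ => hwι x)]
    exact Finset.sum_coe_sort B θ
  have hwfsum : ∀ i, ∑ j, w j * (f j i : ℝ) = ∑ b ∈ B, θ b * (b i : ℝ) := by
    intro i
    rw [← Finset.sum_subset (Finset.subset_univ (Finset.univ.map ι))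
      (fun j _ hj => by rw [hwzero j hj, zero_mul]), Finset.sum_map]
    rw [Finset.sum_congr rfl (fun x _ => by rw [hwι x, hfι x])]
    exact Finset.sum_coe_sort B (fun b => θ b * (b i : ℝ))
  have hTF : TFeas b₀ ε f := by
    refine ⟨w, fun j => ?_, by rw [hwsum]; exact hθ1, fun i => by
      rw [hwfsum i]; exact (hcon i).le⟩
    rw [hw]
    by_cases h : ∃ x : {x // x ∈ B}, ι x = j
    · simp only [dif_pos h]; exact hθ0 _
    · simp only [dif_neg h]; exact le_refl 0
  obtain ⟨w', hw'0, hw'1, hw'le⟩ := hA f hTF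
  set θ' : (Fin k → ℕ) → ℝ :=
    fun b => ∑ j ∈ Finset.univ.filter (fun j => f j = b), w' j with hθ'
  have hθ'0 : ∀ b, 0 ≤ θ' b := fun b => Finset.sum_nonneg (fun j _ => hw'0 j)
  have hθ'1 : ∑ b ∈ B, θ' b = 1 := by
    rw [hθ']
    rw [Finset.sum_fiberwise_of_maps_to (fun j _ => hmem j) w']
    exact hw'1
  have hθ'le : ∀ i, ∑ b ∈ B, θ' b * (b i : ℝ) ≤ b₀ i := by
    intro i
    have heq : ∑ b ∈ B, θ' b * (b i : ℝ) = ∑ j, w' j * (f j i : ℝ) := by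
      rw [← Finset.sum_fiberwise_of_maps_to (fun j _ => hmem j)
        (fun j => w' j * (f j i : ℝ))]
      apply Finset.sum_congr rfl
      intro b _
      rw [hθ', Finset.sum_mul]
      apply Finset.sum_congr rfl
      intro j hj
      rw [(Finset.mem_filter.mp hj).2]
    rw [heq]
    simpa using hw'le i
  exact hnotin (mem_orthantHull_of_feas b₀ B θ' hθ'0 hθ'1 hθ'le)
end
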